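/- arXiv:2106.14856 — 11 statements merged into one kernel-verified Lean document; each statement's English description precedes it below -/
import Mathlib

section
/- For every natural number N ≥ 1, the graph F_N is isomorphic to a subgraph of the Farey graph. Precisely, the map φ : X_N → X_1 sending a reduced fraction x/(Ny) to the reduced fraction x/y (and ∞ to ∞) is injective, and two vertices of X_N are adjacent in F_N if and only if their images under φ are adjacent in the Farey graph F_1. -/
/-- Membership in the vertex set `X_N`: a pair `(p, q)` of integers represents the
reduced fraction `p/q` with `q ≥ 0`, `gcd(p, q) = 1` and `N ∣ q`; the pair `(1, 0)`
represents `∞ = 1/0`. -/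
def memX (N : ℕ) (v : ℤ × ℤ) : Prop :=
  0 ≤ v.2 ∧ IsCoprime v.1 v.2 ∧ (N : ℤ) ∣ v.2 ∧ (v.2 = 0 → v.1 = 1)

/-- The vertex set `X_N` of the graph `F_N`. -/
def X (N : ℕ) : Type := {v : ℤ × ℤ // memX N v}

/-- The vertex `∞ = 1/0`. -/
def infty (N : ℕ) : X N :=
  ⟨(1, 0), ⟨le_refl 0, isCoprime_one_left, dvd_zero _, fun _ => rfl⟩⟩

/-- The value of a vertex as a rational number (`∞` is sent to junk). -/
def fval {N : ℕ} (v : X N) : ℚ := (v.1.1 : ℚ) / (v.1.2 : ℚ)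

/-- The graph `F_N`: two vertices `p/q` and `r/s` (in lowest terms, with `∞ = 1/0`)
are adjacent if and only if `r*q - s*p = ±N`. -/
def FareyGraph (N : ℕ) : SimpleGraph (X N) where
  Adj v w := v ≠ w ∧ (w.1.1 * v.1.2 - w.1.2 * v.1.1 = (N : ℤ) ∨
      w.1.1 * v.1.2 - w.1.2 * v.1.1 = -(N : ℤ))
  symm := by
    constructor
    rintro v w ⟨hne, h | h⟩
    · exact ⟨hne.symm, Or.inr (by linear_combination -h)⟩
    · exact ⟨hne.symm, Or.inl (by linear_combination -h)⟩
  loopless := by constructor; rintro v ⟨hne, -⟩; exact hne rfl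

/-! A vertex of `X_N` is a reduced fraction `p/(N q)`; then `p/q` is still reduced, and the
determinant of two such vertices is `N` times the determinant of their images, so
`±N`-adjacency in `F_N` is exactly `±1`-adjacency of the images in the Farey graph. -/

lemma mul_eq_self_or_neg_iff {R : Type*} [Ring R] [NoZeroDivisors R] {a d : R} (ha : a ≠ 0) :
    a * d = a ∨ a * d = -a ↔ d = 1 ∨ d = -1 := by
  rw [← mul_neg_one a]
  nth_rewrite 2 [← mul_one a]
  rw [mul_right_inj' ha, mul_right_inj' ha]

lemma memX_one_of_memX {N : ℕ} {v : ℤ × ℤ} (hv : memX N v) : memX 1 (v.1, v.2 / N) := by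
  obtain ⟨hnonneg, hcop, hdvd, hinf⟩ := hv
  have hden : (N : ℤ) * (v.2 / N) = v.2 := Int.mul_ediv_cancel' hdvd
  refine ⟨Int.ediv_nonneg hnonneg (Int.natCast_nonneg N), ?_, one_dvd _,
    fun (h0 : v.2 / N = 0) => ?_⟩
  · rw [← hden] at hcop
    exact hcop.of_mul_right_right
  · exact hinf (by rw [← hden, h0, mul_zero])

/-- The map `φ : X_N → X_1`, `p/(N q) ↦ p/q`. -/
def toFarey {N : ℕ} (v : X N) : X 1 :=
  ⟨(v.1.1, v.1.2 / N), memX_one_of_memX v.2⟩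

section toFarey

variable {N : ℕ}

lemma toFarey_num (v : X N) : (toFarey v).1.1 = v.1.1 := rfl

lemma natCast_mul_toFarey_den (v : X N) : (N : ℤ) * (toFarey v).1.2 = v.1.2 :=
  Int.mul_ediv_cancel' v.2.2.2.1

lemma toFarey_injective : Function.Injective (toFarey (N := N)) := by
  intro v w h
  have hnum : v.1.1 = w.1.1 := by rw [← toFarey_num v, ← toFarey_num w, h]
  have hden : v.1.2 = w.1.2 := by
    rw [← natCast_mul_toFarey_den v, ← natCast_mul_toFarey_den w, h]
  exact Subtype.ext (Prod.ext hnum hden)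

lemma det_eq_natCast_mul_det_toFarey (v w : X N) :
    w.1.1 * v.1.2 - w.1.2 * v.1.1 =
      N * ((toFarey w).1.1 * (toFarey v).1.2 - (toFarey w).1.2 * (toFarey v).1.1) := by
  rw [← natCast_mul_toFarey_den v, ← natCast_mul_toFarey_den w, toFarey_num, toFarey_num]
  ring

end toFarey

lemma fareyGraph_adj {N : ℕ} {v w : X N} :
    (FareyGraph N).Adj v w ↔ v ≠ w ∧ (w.1.1 * v.1.2 - w.1.2 * v.1.1 = (N : ℤ) ∨
      w.1.1 * v.1.2 - w.1.2 * v.1.1 = -(N : ℤ)) :=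
  Iff.rfl

lemma fareyGraph_adj_iff_adj_toFarey {N : ℕ} (hN : N ≠ 0) (v w : X N) :
    (FareyGraph N).Adj v w ↔ (FareyGraph 1).Adj (toFarey v) (toFarey w) := by
  rw [fareyGraph_adj, fareyGraph_adj, toFarey_injective.ne_iff,
    det_eq_natCast_mul_det_toFarey v w, mul_eq_self_or_neg_iff (Nat.cast_ne_zero.mpr hN),
    Nat.cast_one]

/-- For every `N ≥ 1`, `F_N` is isomorphic to a subgraph of the
Farey graph: the map `φ : X_N → X_1` sending the reduced fraction `x/(N·y)` to the
reduced fraction `x/y` (and `∞` to `∞`) is injective, and two vertices of `X_N` are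
adjacent in `F_N` iff their images are adjacent in the Farey graph `F_1`. -/
theorem stmt0 (N : ℕ) (hN : 1 ≤ N) :
    ∃ φ : X N → X 1,
      Function.Injective φ ∧
      (∀ v : X N, (φ v).1.1 = v.1.1 ∧ v.1.2 = (N : ℤ) * (φ v).1.2) ∧
      (∀ v w : X N, (FareyGraph N).Adj v w ↔ (FareyGraph 1).Adj (φ v) (φ w)) :=
  ⟨toFarey, toFarey_injective, fun v => ⟨toFarey_num v, (natCast_mul_toFarey_den v).symm⟩,
    fareyGraph_adj_iff_adj_toFarey (Nat.one_le_iff_ne_zero.mp hN)⟩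
end

section
/- If N = p^l where p is a prime and l ∈ ℕ ∪ {0} (so in particular if N = 1), then the graph F_N is connected. -/
/-! A finite vertex `a/(N m)` with `m ≥ 2` has a neighbour with smaller `m`: from a solution of
`r m - a m₁ = 1` with `0 < m₁ < m` we get the two candidates `r/(N m₁)` and `(a - r)/(N (m - m₁))`,
and when `N = p^l` at least one of the numerators `r`, `a - r` is prime to `p` because their sum `a`
is, so it is a vertex. Descending on `m` reaches `m = 1`, whose vertices are adjacent to `∞`. -/

theorem IsCoprime.exists_sub_mul_eq_one {a m : ℤ} (h : IsCoprime a m) (hm : 1 < m) :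
    ∃ r m₁ : ℤ, 0 < m₁ ∧ m₁ < m ∧ r * m - a * m₁ = 1 := by
  obtain ⟨u, w, huw⟩ := h
  have hdet : (w - a * (-u / m)) * m - a * (-u % m) = 1 := by
    rw [Int.emod_def]; linear_combination huw
  refine ⟨_, _, ?_, Int.emod_lt_of_pos _ (by omega), hdet⟩
  refine (Int.emod_nonneg _ (by omega)).lt_of_ne fun h0 => ?_
  rw [← h0, mul_zero, sub_zero, mul_comm] at hdet
  rcases Int.eq_one_or_neg_one_of_mul_eq_one hdet with h1 | h1 <;> omega

theorem isCoprime_or_isCoprime_sub_of_prime {p a : ℤ} (hp : Prime p) {l : ℕ}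
    (ha : IsCoprime a (p ^ l)) (r : ℤ) : IsCoprime r (p ^ l) ∨ IsCoprime (a - r) (p ^ l) := by
  rcases Nat.eq_zero_or_pos l with rfl | hl
  · exact .inl (pow_zero p ▸ isCoprime_one_right)
  simp only [IsCoprime.pow_right_iff hl, isCoprime_comm (y := p), hp.coprime_iff_not_dvd] at ha ⊢
  by_contra! h
  exact ha (by simpa using dvd_add h.1 h.2)

theorem eq_infty_of_snd_eq_zero {N : ℕ} (v : X N) (h : v.1.2 = 0) : v = infty N :=
  Subtype.ext (Prod.ext (v.2.2.2.2 h) h)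

namespace FareyGraph

theorem adj_infty_of_snd_eq {N : ℕ} (hN : N ≠ 0) (v : X N) (hv : v.1.2 = N) :
    (FareyGraph N).Adj v (infty N) := by
  refine ⟨fun h => hN ?_, .inl ?_⟩
  · simpa [h, infty] using hv.symm
  · show 1 * v.1.2 - 0 * v.1.1 = N
    rw [hv]; ring

theorem exists_adj_snd_eq {N : ℕ} (hN : N ≠ 0) (v : X N) {m r m₁ : ℤ}
    (hv : v.1.2 = N * m) (hm₁ : 0 < m₁) (hne : m₁ ≠ m) (hr : IsCoprime r N)
    (hdet : r * m - v.1.1 * m₁ = 1 ∨ r * m - v.1.1 * m₁ = -1) :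
    ∃ w : X N, (FareyGraph N).Adj v w ∧ w.1.2 = N * m₁ := by
  have hNm₁ : (0 : ℤ) < N * m₁ := mul_pos (by omega) hm₁
  have hrm₁ : IsCoprime r m₁ := by
    rcases hdet with h | h
    · exact ⟨m, -v.1.1, by linear_combination h⟩
    · exact ⟨-m, v.1.1, by linear_combination -h⟩
  let w : X N := ⟨(r, N * m₁), hNm₁.le, hr.mul_right hrm₁, dvd_mul_right _ _,
    fun h => absurd h hNm₁.ne'⟩
  refine ⟨w, ⟨fun hvw => hne ?_, ?_⟩, rfl⟩
  · have : (N : ℤ) * m = N * m₁ := hv ▸ congrArg (fun u : X N => u.1.2) hvw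
    exact (mul_left_cancel₀ (by omega) this).symm
  · show r * v.1.2 - N * m₁ * v.1.1 = N ∨ r * v.1.2 - N * m₁ * v.1.1 = -N
    rw [hv]
    rcases hdet with h | h
    · exact .inl (by linear_combination (N : ℤ) * h)
    · exact .inr (by linear_combination (N : ℤ) * h)

theorem reachable_infty {p : ℕ} (hp : p.Prime) (l : ℕ) (v : X (p ^ l)) :
    (FareyGraph (p ^ l)).Reachable v (infty _) := by
  have hN : p ^ l ≠ 0 := pow_ne_zero _ hp.ne_zero
  obtain ⟨c, hc⟩ := v.2.2.2.1
  have hc0 : 0 ≤ c := (mul_nonneg_iff_of_pos_left (by omega)).1 (hc ▸ v.2.1)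
  lift c to ℕ using hc0
  induction c using Nat.strong_induction_on generalizing v with
  | _ m ih =>
  rcases m with _ | _ | m
  · rw [eq_infty_of_snd_eq_zero v (by simpa using hc)]
  · exact (adj_infty_of_snd_eq hN v (by simpa using hc)).reachable
  have hco : IsCoprime v.1.1 (((p ^ l : ℕ) : ℤ) * (m + 2 : ℕ)) := hc ▸ v.2.2.1
  have descend (r m₁ : ℤ) (hm₁ : 0 < m₁) (hlt : m₁ < (m + 2 : ℕ)) (hr : IsCoprime r (p ^ l : ℕ))
      (hdet : r * (m + 2 : ℕ) - v.1.1 * m₁ = 1 ∨ r * (m + 2 : ℕ) - v.1.1 * m₁ = -1) :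
      (FareyGraph (p ^ l)).Reachable v (infty _) := by
    obtain ⟨w, hvw, hw⟩ := exists_adj_snd_eq hN v hc hm₁ hlt.ne hr hdet
    lift m₁ to ℕ using hm₁.le
    exact hvw.reachable.trans (ih m₁ (by omega) w hw)
  obtain ⟨r, m₁, hm₁, hlt, hdet⟩ := hco.of_mul_right_right.exists_sub_mul_eq_one (by omega)
  rcases isCoprime_or_isCoprime_sub_of_prime (Nat.prime_iff_prime_int.1 hp)
    (by simpa using hco.of_mul_right_left) r with hr | hr
  · exact descend r m₁ hm₁ hlt (by simpa using hr) (.inl hdet)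
  · exact descend (v.1.1 - r) ((m + 2 : ℕ) - m₁) (by omega) (by omega) (by simpa using hr)
      (.inr (by linear_combination -hdet))

end FareyGraph


/-- If `N = p^l` with `p` prime and `l ∈ ℕ ∪ {0}` (so in
particular if `N = 1`), then the graph `F_N` is connected. -/
theorem stmt2 (p l : ℕ) (hp : p.Prime) : (FareyGraph (p ^ l)).Connected := by
  rw [SimpleGraph.connected_iff_exists_forall_reachable]
  exact ⟨infty _, fun v => (FareyGraph.reachable_infty hp l v).symm⟩
end

section
/- For every prime p, every l ∈ ℕ, and every vertex P = x/(p^l y) ∈ X_{p^l} with x/(p^l y) in lowest terms, there exists a path ∞ → P_0 → P_1 → ⋯ → P_n = P in F_{p^l} whose vertices P_i = p_i/q_i (in lowest terms) have strictly increasing denominators q_0 < q_1 < ⋯ < q_n. -/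
/-! Every finite vertex `a / (N k)` of `F_N`, `N = p ^ l`, has a neighbour of smaller
denominator: `∞` if `k = 1`, and otherwise `r / (N s)` with `k r - a s = ±1` and `0 < s < k`.
Of the two such solutions `(s, r)` and `(k - s, a - r)`, one has `r` prime to `p` because
`p ∤ a`, so that `r / (N s)` is again a vertex. Descending along these neighbours must reach
`∞`, and read backwards the descent is the required path. -/

theorem WellFounded.exists_chain_of_forall_ne_exists_rel {V : Type*} {R : V → V → Prop}
    (hR : WellFounded R) (v₀ : V) (hpred : ∀ x, x ≠ v₀ → ∃ y, R y x) (x : V) :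
    ∃ (n : ℕ) (P : ℕ → V), P 0 = v₀ ∧ P n = x ∧ ∀ i < n, R (P i) (P (i + 1)) := by
  induction x using hR.induction with
  | _ x ih =>
  by_cases hx : x = v₀
  · exact ⟨0, fun _ => v₀, rfl, hx.symm, by simp⟩
  obtain ⟨y, hyx⟩ := hpred x hx
  obtain ⟨n, P, hP0, hPn, hP⟩ := ih y hyx
  refine ⟨n + 1, Function.update P (n + 1) x, ?_, by simp, fun i hi => ?_⟩
  · rwa [Function.update_of_ne (by omega)]
  rcases Nat.lt_succ_iff_lt_or_eq.mp hi with hi | rfl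
  · rw [Function.update_of_ne (by omega), Function.update_of_ne (by omega)]
    exact hP i hi
  · rwa [Function.update_of_ne (by omega), Function.update_self, hPn]

lemma Int.exists_mul_sub_mul_eq_one {a q : ℤ} (h : IsCoprime a q) (hq : 1 < q) :
    ∃ s r, 0 < s ∧ s < q ∧ q * r - a * s = 1 := by
  obtain ⟨u, v, huv⟩ := h
  obtain ⟨r, hr⟩ : q ∣ a * (-u % q) + 1 :=
    ⟨v - a * (-u / q), by rw [Int.emod_def]; linear_combination -huv⟩
  have hs0 : -u % q ≠ 0 := by
    intro h0
    rw [h0, mul_zero, zero_add] at hr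
    have := Int.eq_one_of_mul_eq_one_right (by omega) hr.symm
    omega
  exact ⟨-u % q, r, lt_of_le_of_ne (Int.emod_nonneg _ (by omega)) (Ne.symm hs0),
    Int.emod_lt_of_pos _ (by omega), by linear_combination -hr⟩

lemma Int.exists_mul_sub_mul_eq_one_isCoprime_pow {p a q : ℤ} (hp : Prime p) {l : ℕ}
    (ha : IsCoprime a (p ^ l)) (haq : IsCoprime a q) (hq : 1 < q) :
    ∃ s r, 0 < s ∧ s < q ∧ IsCoprime r (p ^ l) ∧ (q * r - a * s = 1 ∨ q * r - a * s = -1) := by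
  obtain ⟨s, r, hs0, hsq, hrel⟩ := Int.exists_mul_sub_mul_eq_one haq hq
  rcases Nat.eq_zero_or_pos l with rfl | hl
  · exact ⟨s, r, hs0, hsq, by rw [pow_zero]; exact isCoprime_one_right, Or.inl hrel⟩
  have hpa : ¬p ∣ a := hp.coprime_iff_not_dvd.1 ((IsCoprime.pow_right_iff hl).1 ha).symm
  have coprime_pow {b : ℤ} (hb : ¬p ∣ b) : IsCoprime b (p ^ l) :=
    (hp.coprime_iff_not_dvd.2 hb).symm.pow_right
  by_cases hpr : p ∣ r
  · refine ⟨q - s, a - r, by omega, by omega, coprime_pow fun h => hpa ?_,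
      Or.inr (by linear_combination -hrel)⟩
    simpa using dvd_add h hpr
  · exact ⟨s, r, hs0, hsq, coprime_pow hpr, Or.inl hrel⟩

lemma X.snd_pos {N : ℕ} {x : X N} (hx : x ≠ infty N) : 0 < x.1.2 := by
  obtain ⟨hq0, -, -, hinf⟩ := x.2
  exact lt_of_le_of_ne hq0 fun hq => hx (Subtype.ext (Prod.ext (hinf hq.symm) hq.symm))

lemma fareyGraph_adj_of_snd_lt {N : ℕ} {v w : X N} (hlt : v.1.2 < w.1.2)
    (h : w.1.1 * v.1.2 - w.1.2 * v.1.1 = N ∨ w.1.1 * v.1.2 - w.1.2 * v.1.1 = -N) :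
    (FareyGraph N).Adj v w :=
  ⟨fun hvw => hlt.ne (congrArg (·.1.2) hvw), h⟩

lemma exists_fareyGraph_adj_snd_lt {p l : ℕ} (hp : p.Prime) {x : X (p ^ l)}
    (hx : x ≠ infty (p ^ l)) :
    ∃ y, (FareyGraph (p ^ l)).Adj y x ∧ y.1.2 < x.1.2 := by
  have hxpos := X.snd_pos hx
  obtain ⟨-, hcop, ⟨k, hk⟩, -⟩ := x.2
  have hNpos : (0 : ℤ) < (p ^ l : ℕ) := by have := hp.pos; positivity
  have hkpos : 0 < k := pos_of_mul_pos_right (hk ▸ hxpos) hNpos.le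
  rcases (show k = 1 ∨ 1 < k by omega) with rfl | hk1
  · refine ⟨infty (p ^ l), fareyGraph_adj_of_snd_lt hxpos (Or.inr ?_), hxpos⟩
    simp [infty, hk]
  have hN : ((p ^ l : ℕ) : ℤ) = (p : ℤ) ^ l := Nat.cast_pow p l
  obtain ⟨s, r, hs0, hsk, hrN, hrel⟩ := Int.exists_mul_sub_mul_eq_one_isCoprime_pow
    (Nat.prime_iff_prime_int.mp hp) (hN ▸ hcop.of_isCoprime_of_dvd_right ⟨k, hk⟩)
    (hcop.of_isCoprime_of_dvd_right ⟨_, hk.trans (mul_comm _ _)⟩) hk1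
  have hrs : IsCoprime r s := by
    rcases hrel with h | h
    · exact ⟨k, -x.1.1, by linear_combination h⟩
    · exact ⟨-k, x.1.1, by linear_combination -h⟩
  let y : X (p ^ l) := ⟨(r, (p ^ l : ℕ) * s), by positivity, (hN ▸ hrN).mul_right hrs,
    dvd_mul_right _ s, fun h => absurd h (by positivity)⟩
  have hlt : y.1.2 < x.1.2 := by dsimp [y]; rw [hk]; nlinarith
  refine ⟨y, fareyGraph_adj_of_snd_lt hlt ?_, hlt⟩
  dsimp [y]
  rw [hN] at hk
  rcases hrel with h | h
  · exact Or.inr (by linear_combination -(p : ℤ) ^ l * h - r * hk)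
  · exact Or.inl (by linear_combination -(p : ℤ) ^ l * h - r * hk)

theorem stmt3_general (p l : ℕ) (hp : p.Prime) (x : X (p ^ l))
    (hx : x ≠ infty (p ^ l)) :
    ∃ (n : ℕ) (P : ℕ → X (p ^ l)),
      P 0 = infty (p ^ l) ∧ P (n + 1) = x ∧
      (∀ i, i ≤ n → (FareyGraph (p ^ l)).Adj (P i) (P (i + 1))) ∧
      (∀ i, i ≤ n → (P i).1.2 < (P (i + 1)).1.2) := by
  have hwf : WellFounded fun y x : X (p ^ l) => (FareyGraph (p ^ l)).Adj y x ∧ y.1.2 < x.1.2 :=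
    Subrelation.wf (fun {y x} h => show y.1.2.toNat < x.1.2.toNat by have := y.2.1; omega)
      (measure fun v : X (p ^ l) => v.1.2.toNat).wf
  obtain ⟨n, P, hP0, hPn, hP⟩ := hwf.exists_chain_of_forall_ne_exists_rel (infty (p ^ l))
    (fun _ hy => exists_fareyGraph_adj_snd_lt hp hy) x
  obtain ⟨m, rfl⟩ : ∃ m, n = m + 1 :=
    Nat.exists_eq_succ_of_ne_zero (by rintro rfl; exact hx (hPn.symm.trans hP0))
  exact ⟨m, P, hP0, hPn, fun i hi => (hP i (by omega)).1, fun i hi => (hP i (by omega)).2⟩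

/-- For every prime `p`, `l ∈ ℕ`, and vertex `x ≠ ∞` of `F_{p^l}`,
there is a path `∞ = P 0 → P 1 → ⋯ → P (n+1) = x` in `F_{p^l}` whose vertices have
strictly increasing denominators. -/
theorem stmt3 (p l : ℕ) (hp : p.Prime) (hl : 1 ≤ l) (x : X (p ^ l))
    (hx : x ≠ infty (p ^ l)) :
    ∃ (n : ℕ) (P : ℕ → X (p ^ l)),
      P 0 = infty (p ^ l) ∧ P (n + 1) = x ∧
      (∀ i, i ≤ n → (FareyGraph (p ^ l)).Adj (P i) (P (i + 1))) ∧
      (∀ i, i ≤ n → (P i).1.2 < (P (i + 1)).1.2) :=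
  stmt3_general p l hp x hx
end

section
/- The convergents of an F_N-continued fraction are pairwise distinct: if i ≠ j then p_i/q_i ≠ p_j/q_j. -/
/-- A finite `F_N`-continued fraction `1/(0+) N/(b+) ε₁/(a₁+) ⋯ εₙ/(aₙ)` with `n`
partial quotients.  Indices are shifted by one: the field `p i` is the paper's
`p_{i-1}`, so `p 0 = p₋₁ = 1`, `q 0 = q₋₁ = 0`, `p 1 = p₀ = b`, `q 1 = q₀ = N`,
and the paper's `i`-th convergent `p_i/q_i` is `p (i+1) / q (i+1)`. -/
structure FCF (N : ℕ) (n : ℕ) where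
  b : ℤ
  a : ℕ → ℤ
  ε : ℕ → ℤ
  p : ℕ → ℤ
  q : ℕ → ℤ
  hb : IsCoprime b (N : ℤ)
  hp0 : p 0 = 1
  hq0 : q 0 = 0
  hp1 : p 1 = b
  hq1 : q 1 = N
  ha : ∀ i, 1 ≤ i → i ≤ n → 1 ≤ a i
  hε : ∀ i, 1 ≤ i → i ≤ n → ε i = 1 ∨ ε i = -1
  hrecp : ∀ i, 1 ≤ i → i ≤ n → p (i + 1) = a i * p i + ε i * p (i - 1)
  hrecq : ∀ i, 1 ≤ i → i ≤ n → q (i + 1) = a i * q i + ε i * q (i - 1)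
  cond1 : ∀ i, 1 ≤ i → i < n → 1 ≤ a i + ε (i + 1)
  cond2 : ∀ i, 1 ≤ i → i ≤ n → 1 ≤ a i + ε i
  cond3 : ∀ i, 1 ≤ i → i ≤ n → IsCoprime (p (i + 1)) (q (i + 1))

/-!
Convergents are reduced fractions with positive denominators (`gcd(p_k, q_k) = 1` is built into
the definition), so equal convergents have equal numerators and denominators. The recurrence
`q_{k+1} = a_{k+1} q_k + ε_{k+1} q_{k-1}` makes the denominators strictly increasing from `q_1`
on: for `ε = 1` the new term is positive, and for `ε = -1` the condition `a + ε ≥ 1` forces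
`a ≥ 2`. Before that only `q_0 = N ≤ a_1 N = q_1` holds, and equality there means `a_1 = 1`,
whence `p_1 = b + ε_1 ≠ b = p_0`.
-/

theorem lt_mul_add_mul_of_sign {a ε x y : ℤ} (hε : ε = 1 ∨ ε = -1) (ha : 1 ≤ a)
    (haε : 1 ≤ a + ε) (hx : 0 < x) (hxy : x ≤ y) (hlt : ε = -1 → x < y) :
    y < a * y + ε * x := by
  rcases hε with rfl | rfl
  · nlinarith
  · nlinarith [hlt rfl]

namespace FCF

variable {N n : ℕ} (F : FCF N n)

theorem q_two (hn : 1 ≤ n) : F.q 2 = F.a 1 * N := by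
  simpa [F.hq0, F.hq1] using F.hrecq 1 le_rfl hn

theorem p_two (hn : 1 ≤ n) : F.p 2 = F.a 1 * F.b + F.ε 1 := by
  simpa [F.hp0, F.hp1] using F.hrecp 1 le_rfl hn

theorem q_one_le_q_two (hn : 1 ≤ n) : F.q 1 ≤ F.q 2 := by
  rw [F.q_two hn, F.hq1]
  nlinarith [F.ha 1 le_rfl hn]

theorem q_pos_and_q_lt_q_succ (hN : 0 < N) :
    ∀ k, 2 ≤ k → k ≤ n → 0 < F.q k ∧ F.q k < F.q (k + 1) := by
  intro k hk
  induction k, hk using Nat.le_induction with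
  | base =>
    intro hn
    have hq1 : (0 : ℤ) < F.q 1 := by rw [F.hq1]; exact_mod_cast hN
    have hq12 := F.q_one_le_q_two (by omega)
    refine ⟨hq1.trans_le hq12, ?_⟩
    rw [F.hrecq 2 (by norm_num) hn]
    refine lt_mul_add_mul_of_sign (F.hε 2 (by norm_num) hn) (F.ha 2 (by norm_num) hn)
      (F.cond2 2 (by norm_num) hn)
      hq1 hq12 fun hε2 => ?_
    have ha1 : 2 ≤ F.a 1 := by linarith [F.cond1 1 le_rfl hn]
    rw [F.q_two (by omega), F.hq1]
    nlinarith
  | succ k hk ih =>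
    intro hkn
    obtain ⟨hqk, hlt⟩ := ih (by omega)
    refine ⟨hqk.trans hlt, ?_⟩
    rw [F.hrecq (k + 1) (by omega) hkn]
    exact lt_mul_add_mul_of_sign (F.hε _ (by omega) hkn) (F.ha _ (by omega) hkn)
      (F.cond2 _ (by omega) hkn) hqk hlt.le fun _ => hlt

theorem strictMonoOn_q (hN : 0 < N) : StrictMonoOn F.q (Set.Icc 2 (n + 1)) :=
  strictMonoOn_of_lt_add_one Set.ordConnected_Icc fun k _ hk hk1 =>
    (F.q_pos_and_q_lt_q_succ hN k hk.1 (by simpa using hk1.2)).2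

theorem q_one_le (hN : 0 < N) {k : ℕ} (hk : 1 ≤ k) (hkn : k ≤ n + 1) : F.q 1 ≤ F.q k := by
  obtain rfl | hk2 := hk.eq_or_lt
  · exact le_rfl
  exact (F.q_one_le_q_two (by omega)).trans <|
    (F.strictMonoOn_q hN).monotoneOn ⟨le_rfl, by omega⟩ ⟨hk2, hkn⟩ hk2

theorem q_pos (hN : 0 < N) {k : ℕ} (hk : 1 ≤ k) (hkn : k ≤ n + 1) : 0 < F.q k := by
  have := F.q_one_le hN hk hkn
  rw [F.hq1] at this
  omega

theorem q_lt_q (hN : 0 < N) {i j : ℕ} (hi : 1 ≤ i) (hij : i < j) (hj : 3 ≤ j)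
    (hjn : j ≤ n + 1) : F.q i < F.q j := by
  obtain rfl | hi2 := hi.eq_or_lt
  · exact (F.q_one_le_q_two (by omega)).trans_lt <|
      F.strictMonoOn_q hN ⟨le_rfl, by omega⟩ ⟨by omega, hjn⟩ (by omega)
  · exact F.strictMonoOn_q hN ⟨hi2, by omega⟩ ⟨by omega, hjn⟩ hij

theorem isCoprime_p_q {k : ℕ} (hk : 1 ≤ k) (hkn : k ≤ n + 1) : IsCoprime (F.p k) (F.q k) := by
  obtain rfl | hk2 := hk.eq_or_lt
  · rw [F.hp1, F.hq1]
    exact F.hb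
  · obtain ⟨k, rfl⟩ : ∃ m, k = m + 1 := ⟨k - 1, by omega⟩
    exact F.cond3 k (by omega) (by omega)

theorem p_eq_and_q_eq_of_div_eq (hN : 0 < N) {i j : ℕ} (hi : 1 ≤ i) (hin : i ≤ n + 1)
    (hj : 1 ≤ j) (hjn : j ≤ n + 1) (h : (F.p i : ℚ) / F.q i = (F.p j : ℚ) / F.q j) :
    F.p i = F.p j ∧ F.q i = F.q j :=
  Rat.div_int_inj (F.q_pos hN hi hin) (F.q_pos hN hj hjn)
    (Int.isCoprime_iff_gcd_eq_one.mp (F.isCoprime_p_q hi hin))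
    (Int.isCoprime_iff_gcd_eq_one.mp (F.isCoprime_p_q hj hjn)) h

theorem p_two_ne_p_one_of_q_two_eq (hN : 0 < N) (hn : 1 ≤ n) (hq : F.q 2 = F.q 1) :
    F.p 2 ≠ F.p 1 := by
  have ha1 : F.a 1 = 1 := by
    rw [F.q_two hn, F.hq1] at hq
    exact (mul_eq_right₀ (by exact_mod_cast hN.ne')).mp hq
  rw [F.p_two hn, F.hp1, ha1]
  rcases F.hε 1 le_rfl hn with h | h <;> omega

theorem div_ne_div_of_lt (hN : 0 < N) {i j : ℕ} (hi : 1 ≤ i) (hij : i < j) (hjn : j ≤ n + 1) :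
    (F.p i : ℚ) / F.q i ≠ (F.p j : ℚ) / F.q j := by
  intro h
  obtain ⟨hp, hq⟩ := F.p_eq_and_q_eq_of_div_eq hN hi (by omega) (by omega) hjn h
  by_cases hj : 3 ≤ j
  · exact (F.q_lt_q hN hi hij hj hjn).ne hq
  · obtain ⟨rfl, rfl⟩ : i = 1 ∧ j = 2 := by omega
    exact F.p_two_ne_p_one_of_q_two_eq hN (by omega) hq.symm hp.symm

end FCF

/-- The convergents of an `F_N`-continued fraction are pairwise
distinct (`F.p (i+1) / F.q (i+1)` is the paper's `i`-th convergent `p_i/q_i`). -/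
theorem stmt8 (N n : ℕ) (hN : 1 < N) (F : FCF N n) :
    ∀ i j, 1 ≤ i → i ≤ n + 1 → 1 ≤ j → j ≤ n + 1 → i ≠ j →
      (F.p i : ℚ) / (F.q i : ℚ) ≠ (F.p j : ℚ) / (F.q j : ℚ) := by
  intro i j hi hin hj hjn hij
  rcases hij.lt_or_gt with h | h
  · exact F.div_ne_div_of_lt (by omega) hi h hjn
  · exact (F.div_ne_div_of_lt (by omega) hj h hin).symm
end

section
/- Let N ∈ ℕ and suppose ∞ = P_{−1} → P_0 = b/N → P_1 → ⋯ → P_n is a path in F_N whose vertices P_i = p_i/q_i (in lowest terms, with p_{−1} = 1, q_{−1} = 0, p_0 = b, q_0 = N) have strictly increasing denominators q_{−1} < q_0 < q_1 < ⋯ < q_n and with P_n ≠ b/N. Then for every 1 ≤ i ≤ n there exist a positive integer a_i and ε_i ∈ {1, −1} such that p_i = a_i p_{i−1} + ε_i p_{i−2} and q_i = a_i q_{i−1} + ε_i q_{i−2}. -/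
theorem Int.exists_eq_mul_of_mul_eq_mul {p q x y : ℤ} (hpq : IsCoprime p q)
    (h : x * q = y * p) : ∃ a, x = a * p ∧ y = a * q := by
  obtain ⟨u, v, huv⟩ := hpq
  exact ⟨u * x + v * y, by linear_combination (-x) * huv + v * h,
    by linear_combination (-y) * huv - u * h⟩

theorem Int.exists_sign_add_mul_eq_zero {d₁ d₂ N : ℤ} (h₁ : d₁ = N ∨ d₁ = -N)
    (h₂ : d₂ = N ∨ d₂ = -N) : ∃ ε : ℤ, (ε = 1 ∨ ε = -1) ∧ d₂ + ε * d₁ = 0 := by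
  rcases h₁ with h₁ | h₁ <;> rcases h₂ with h₂ | h₂
  · exact ⟨-1, Or.inr rfl, by linear_combination h₂ - h₁⟩
  · exact ⟨1, Or.inl rfl, by linear_combination h₂ + h₁⟩
  · exact ⟨1, Or.inl rfl, by linear_combination h₂ + h₁⟩
  · exact ⟨-1, Or.inr rfl, by linear_combination h₂ - h₁⟩

theorem Int.one_le_of_eq_mul_add_sign {a ε q₀ q₁ q₂ : ℤ} (hε : ε = 1 ∨ ε = -1)
    (h₀ : 0 ≤ q₀) (h₀₁ : q₀ < q₁) (h₁₂ : q₁ < q₂) (h : q₂ = a * q₁ + ε * q₀) : 1 ≤ a := by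
  by_contra! ha
  rcases hε with rfl | rfl <;> nlinarith

theorem FareyGraph.exists_recurrence {N : ℕ} {u v w : X N} (huv : (FareyGraph N).Adj u v)
    (hvw : (FareyGraph N).Adj v w) (hq₀₁ : u.1.2 < v.1.2) (hq₁₂ : v.1.2 < w.1.2) :
    ∃ a ε : ℤ, 1 ≤ a ∧ (ε = 1 ∨ ε = -1) ∧
      w.1.1 = a * v.1.1 + ε * u.1.1 ∧ w.1.2 = a * v.1.2 + ε * u.1.2 := by
  obtain ⟨ε, hε, hdet⟩ := Int.exists_sign_add_mul_eq_zero huv.2 hvw.2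
  obtain ⟨a, hp, hq⟩ := Int.exists_eq_mul_of_mul_eq_mul (x := w.1.1 - ε * u.1.1)
    (y := w.1.2 - ε * u.1.2) v.2.2.1 (by linear_combination hdet)
  have hq' : w.1.2 = a * v.1.2 + ε * u.1.2 := by linear_combination hq
  exact ⟨a, ε, Int.one_le_of_eq_mul_add_sign hε u.2.1 hq₀₁ hq₁₂ hq', hε,
    by linear_combination hp, hq'⟩

theorem stmt10_general (N : ℕ) (n : ℕ) (P : ℕ → X N)
    (hadj : ∀ i, i ≤ n → (FareyGraph N).Adj (P i) (P (i + 1)))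
    (hden : ∀ i, i ≤ n → (P i).1.2 < (P (i + 1)).1.2) :
    ∀ i, 1 ≤ i → i ≤ n →
      ∃ a ε : ℤ, 1 ≤ a ∧ (ε = 1 ∨ ε = -1) ∧
        (P (i + 1)).1.1 = a * (P i).1.1 + ε * (P (i - 1)).1.1 ∧
        (P (i + 1)).1.2 = a * (P i).1.2 + ε * (P (i - 1)).1.2 := by
  rintro (_ | j) hj hjn
  · omega
  exact FareyGraph.exists_recurrence (hadj j (by omega)) (hadj (j + 1) hjn)
    (hden j (by omega)) (hden (j + 1) hjn)

/-- If `∞ = P 0 → P 1 = b/N → ⋯ → P (n+1)` is a path in `F_N`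
with strictly increasing denominators and `P (n+1) ≠ b/N`, then for every
`1 ≤ i ≤ n` there are `a ≥ 1` and `ε = ±1` with
`pᵢ = a·p_{i-1} + ε·p_{i-2}` and `qᵢ = a·q_{i-1} + ε·q_{i-2}`
(paper's `P_{i}` is `P (i+1)`). -/
theorem stmt10 (N : ℕ) (hN : 1 ≤ N) (n : ℕ) (P : ℕ → X N)
    (h0 : P 0 = infty N)
    (hadj : ∀ i, i ≤ n → (FareyGraph N).Adj (P i) (P (i + 1)))
    (hden : ∀ i, i ≤ n → (P i).1.2 < (P (i + 1)).1.2)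
    (hq0 : (P 1).1.2 = (N : ℤ))
    (hne : P (n + 1) ≠ P 1) :
    ∀ i, 1 ≤ i → i ≤ n →
      ∃ a ε : ℤ, 1 ≤ a ∧ (ε = 1 ∨ ε = -1) ∧
        (P (i + 1)).1.1 = a * (P i).1.1 + ε * (P (i - 1)).1.1 ∧
        (P (i + 1)).1.2 = a * (P i).1.2 + ε * (P (i - 1)).1.2 :=
  stmt10_general N n P hadj hden
end

section
/- Let N ∈ ℕ and suppose ∞ = P_{−1} → P_0 = b/N → P_1 → ⋯ → P_n is a path in F_N whose vertices P_i = p_i/q_i (in lowest terms, with p_{−1} = 1, q_{−1} = 0, p_0 = b, q_0 = N) have strictly increasing denominators, and let a_i ≥ 1 and ε_i ∈ {1,−1} be the coefficients satisfying p_i = a_i p_{i−1} + ε_i p_{i−2} and q_i = a_i q_{i−1} + ε_i q_{i−2} for 1 ≤ i ≤ n. Then ε_1 = −1 if and only if P_1 < P_0, and for every 2 ≤ i ≤ n, ε_i = −1 if and only if the differences P_i − P_{i−1} and P_{i−1} − P_{i−2} have the same sign (i.e., the edge P_{i−1} → P_i is direction retaining). -/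
lemma mul_neg_iff_of_eq_one_or_eq_neg_one {e d : ℤ} (he : e = 1 ∨ e = -1) (hd : 0 < d) :
    e * d < 0 ↔ e = -1 := by
  rcases he with rfl | rfl <;> omega

lemma neg_mul_mul_pos_iff_of_eq_one_or_eq_neg_one {e d : ℤ} (he : e = 1 ∨ e = -1)
    (hd : d ≠ 0) : 0 < -e * d * d ↔ e = -1 := by
  have hdd : 0 < d * d := mul_self_pos.mpr hd
  rcases he with rfl | rfl <;> constructor <;> intro h <;> linarith

lemma X.den_nonneg {N : ℕ} (v : X N) : 0 ≤ v.1.2 := v.2.1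

namespace FareyGraph

def cross (v w : ℤ × ℤ) : ℤ := w.1 * v.2 - w.2 * v.1

lemma cross_eq_neg_mul_of_recurrence {u v w : ℤ × ℤ} {a e : ℤ}
    (hp : w.1 = a * v.1 + e * u.1) (hq : w.2 = a * v.2 + e * u.2) :
    cross v w = -e * cross u v := by
  rw [cross, cross, hp, hq]
  ring

variable {N : ℕ}

lemma cross_ne_zero_of_adj (hN : 0 < N) {v w : X N} (h : (FareyGraph N).Adj v w) :
    cross v.1 w.1 ≠ 0 := by
  rcases h.2 with h | h <;> rw [cross, h] <;> omega

lemma fval_sub_fval {v w : X N} (hv : 0 < v.1.2) (hw : 0 < w.1.2) :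
    fval w - fval v = cross v.1 w.1 / (v.1.2 * w.1.2) := by
  have hv' : (v.1.2 : ℚ) ≠ 0 := by positivity
  have hw' : (w.1.2 : ℚ) ≠ 0 := by positivity
  rw [fval, fval, cross, div_sub_div _ _ hw' hv']
  push_cast
  ring

lemma fval_lt_fval_iff {v w : X N} (hv : 0 < v.1.2) (hw : 0 < w.1.2) :
    fval w < fval v ↔ cross v.1 w.1 < 0 := by
  rw [← sub_neg, fval_sub_fval hv hw, div_lt_iff₀ (by positivity), zero_mul, Int.cast_lt_zero]

lemma mul_sub_fval_pos_iff {u v w : X N} (hu : 0 < u.1.2) (hv : 0 < v.1.2) (hw : 0 < w.1.2) :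
    0 < (fval w - fval v) * (fval v - fval u) ↔ 0 < cross v.1 w.1 * cross u.1 v.1 := by
  rw [fval_sub_fval hv hw, fval_sub_fval hu hv, div_mul_div_comm,
    div_pos_iff_of_pos_right (by positivity), ← Int.cast_mul, Int.cast_pos]

end FareyGraph

open FareyGraph

theorem stmt11_general (N : ℕ) (hN : 1 ≤ N) (n : ℕ) (P : ℕ → X N)
    (h0 : P 0 = infty N)
    (hadj : ∀ i, i ≤ n → (FareyGraph N).Adj (P i) (P (i + 1)))
    (hden : ∀ i, i ≤ n → (P i).1.2 < (P (i + 1)).1.2)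
    (hq0 : (P 1).1.2 = (N : ℤ))
    (a ε : ℕ → ℤ)
    (hε : ∀ i, 1 ≤ i → i ≤ n → ε i = 1 ∨ ε i = -1)
    (hrecp : ∀ i, 1 ≤ i → i ≤ n →
      (P (i + 1)).1.1 = a i * (P i).1.1 + ε i * (P (i - 1)).1.1)
    (hrecq : ∀ i, 1 ≤ i → i ≤ n →
      (P (i + 1)).1.2 = a i * (P i).1.2 + ε i * (P (i - 1)).1.2) :
    (1 ≤ n → (ε 1 = -1 ↔ fval (P 2) < fval (P 1))) ∧
    (∀ i, 2 ≤ i → i ≤ n →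
      (ε i = -1 ↔ 0 < (fval (P (i + 1)) - fval (P i)) * (fval (P i) - fval (P (i - 1))))) := by
  have hq : ∀ j, 1 ≤ j → j ≤ n + 1 → 0 < (P j).1.2 := by
    intro j h1 h2
    obtain ⟨k, rfl⟩ := Nat.exists_eq_add_of_le' h1
    exact (P k).den_nonneg.trans_lt (hden k (by omega))
  have hcross : ∀ i, 1 ≤ i → i ≤ n →
      cross (P i).1 (P (i + 1)).1 = -ε i * cross (P (i - 1)).1 (P i).1 :=
    fun i h1 h2 => cross_eq_neg_mul_of_recurrence (hrecp i h1 h2) (hrecq i h1 h2)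
  refine ⟨fun hn => ?_, fun i h2 hi => ?_⟩
  · have hcross0 : cross (P 0).1 (P 1).1 = -N := by simp [cross, h0, infty, hq0]
    rw [fval_lt_fval_iff (hq 1 le_rfl (by omega)) (hq 2 (by omega) (by omega)),
      hcross 1 le_rfl hn, hcross0, neg_mul_neg]
    exact (mul_neg_iff_of_eq_one_or_eq_neg_one (hε 1 le_rfl hn) (by omega)).symm
  · obtain ⟨j, rfl⟩ : ∃ j, i = j + 1 := ⟨i - 1, by omega⟩
    rw [Nat.add_sub_cancel, mul_sub_fval_pos_iff (hq j (by omega) (by omega))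
      (hq (j + 1) (by omega) (by omega)) (hq (j + 2) (by omega) (by omega)),
      hcross (j + 1) (by omega) hi]
    exact (neg_mul_mul_pos_iff_of_eq_one_or_eq_neg_one (hε _ (by omega) hi)
      (cross_ne_zero_of_adj hN (hadj j (by omega)))).symm

/-- With the path and coefficients as in Statement 10,
`ε₁ = −1` iff `P₁ < P₀`, and for `2 ≤ i ≤ n`, `εᵢ = −1` iff the differences
`Pᵢ − P_{i−1}` and `P_{i−1} − P_{i−2}` have the same sign, i.e. the edge
`P_{i−1} → Pᵢ` is direction retaining (paper's `P_i` is `P (i+1)`). -/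
theorem stmt11 (N : ℕ) (hN : 1 ≤ N) (n : ℕ) (P : ℕ → X N)
    (h0 : P 0 = infty N)
    (hadj : ∀ i, i ≤ n → (FareyGraph N).Adj (P i) (P (i + 1)))
    (hden : ∀ i, i ≤ n → (P i).1.2 < (P (i + 1)).1.2)
    (hq0 : (P 1).1.2 = (N : ℤ))
    (a ε : ℕ → ℤ)
    (ha : ∀ i, 1 ≤ i → i ≤ n → 1 ≤ a i)
    (hε : ∀ i, 1 ≤ i → i ≤ n → ε i = 1 ∨ ε i = -1)
    (hrecp : ∀ i, 1 ≤ i → i ≤ n →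
      (P (i + 1)).1.1 = a i * (P i).1.1 + ε i * (P (i - 1)).1.1)
    (hrecq : ∀ i, 1 ≤ i → i ≤ n →
      (P (i + 1)).1.2 = a i * (P i).1.2 + ε i * (P (i - 1)).1.2) :
    (1 ≤ n → (ε 1 = -1 ↔ fval (P 2) < fval (P 1))) ∧
    (∀ i, 2 ≤ i → i ≤ n →
      (ε i = -1 ↔ 0 < (fval (P (i + 1)) - fval (P i)) * (fval (P i) - fval (P (i - 1))))) :=
  stmt11_general N hN n P h0 hadj hden hq0 a ε hε hrecp hrecq
end

section
/- Let N > 1 be a natural number, x ∈ X_N, and suppose ∞ = P_{−1} → P_0 → P_1 → ⋯ → P_n = x is a well directed path in F_N with P_i = p_i/q_i in lowest terms. Then P_0 = b/N for some integer b coprime to N, and there exist positive integers a_1, …, a_n and signs ε_1, …, ε_n ∈ {1,−1} such that the data (b, (a_i), (ε_i)) form a finite F_N-continued fraction whose i-th convergent equals P_i for every 0 ≤ i ≤ n; in particular its value is x. -/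
/-- `P 0 = ∞ = P₋₁, P 1 = P₀, …, P (n+1) = Pₙ` is a well directed path in `F_N`:
consecutive vertices are adjacent, denominators strictly increase, and whenever
`P_{i-1}` is adjacent to `P_{i+1}` (paper indices, `0 ≤ i ≤ n-2`), the edge from
`P_{i+1}` to `P_{i+2}` is direction changing, i.e.
`P_i < P_{i+2} < P_{i+1}` or `P_{i+1} < P_{i+2} < P_i`. -/
def IsWellDirectedPath (N : ℕ) (n : ℕ) (P : ℕ → X N) : Prop :=
  P 0 = infty N ∧
  (∀ i, i ≤ n → (FareyGraph N).Adj (P i) (P (i + 1))) ∧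
  (∀ i, i ≤ n → (P i).1.2 < (P (i + 1)).1.2) ∧
  (∀ i, i + 2 ≤ n → (FareyGraph N).Adj (P i) (P (i + 2)) →
    (fval (P (i + 1)) < fval (P (i + 3)) ∧ fval (P (i + 3)) < fval (P (i + 2))) ∨
    (fval (P (i + 2)) < fval (P (i + 3)) ∧ fval (P (i + 3)) < fval (P (i + 1))))

/-- Adjacency in `F_N` reads `cross v w = ±N`. -/
def cross (v w : ℤ × ℤ) : ℤ := w.1 * v.2 - w.2 * v.1

theorem cross_smul_add_smul_left (u v : ℤ × ℤ) (a ε : ℤ) :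
    cross u (a • v + ε • u) = a * cross u v := by
  simp only [cross, Prod.fst_add, Prod.snd_add, Prod.smul_fst, Prod.smul_snd, smul_eq_mul]
  ring

theorem cross_smul_add_smul_right (u v : ℤ × ℤ) (a ε : ℤ) :
    cross v (a • v + ε • u) = -ε * cross u v := by
  simp only [cross, Prod.fst_add, Prod.snd_add, Prod.smul_fst, Prod.smul_snd, smul_eq_mul]
  ring

/-- Cramer's rule for `w` in the basis `v, u`. -/
theorem exists_eq_smul_add_smul_of_cross {u v w : ℤ × ℤ} (hd : cross u v ≠ 0)
    (hdvd : cross u v ∣ cross u w)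
    (hvw : cross v w = cross u v ∨ cross v w = -cross u v) :
    ∃ a ε : ℤ, (ε = 1 ∨ ε = -1) ∧ w = a • v + ε • u := by
  obtain ⟨a, ha⟩ := hdvd
  have cramer : ∀ ε, cross v w = -ε * cross u v → w = a • v + ε • u := by
    intro ε hε
    unfold cross at hd ha hε
    ext
    · apply mul_left_cancel₀ hd
      simp only [Prod.fst_add, Prod.smul_fst, smul_eq_mul]
      linear_combination v.1 * ha - u.1 * hε
    · apply mul_left_cancel₀ hd
      simp only [Prod.snd_add, Prod.smul_snd, smul_eq_mul]
      linear_combination v.2 * ha - u.2 * hε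
  rcases hvw with h | h
  · exact ⟨a, -1, Or.inr rfl, cramer _ (by linear_combination h)⟩
  · exact ⟨a, 1, Or.inl rfl, cramer _ (by linear_combination h)⟩

theorem one_le_and_one_le_add_of_lt {x y z a ε : ℤ} (hx : 0 ≤ x) (hxy : x < y) (hyz : y < z)
    (hε : ε = 1 ∨ ε = -1) (h : z = a * y + ε * x) : 1 ≤ a ∧ 1 ≤ a + ε := by
  rcases hε with rfl | rfl
  · have : 1 ≤ a := by by_contra!; nlinarith
    omega
  · have : 2 ≤ a := by by_contra!; nlinarith
    omega

theorem fval_lt_fval_iff {N : ℕ} {x y : X N} (hx : 0 < x.1.2) (hy : 0 < y.1.2) :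
    fval x < fval y ↔ 0 < cross x.1 y.1 := by
  rw [fval, fval, div_lt_div_iff₀ (by exact_mod_cast hx) (by exact_mod_cast hy), cross,
    sub_pos]
  norm_cast
  rw [mul_comm y.1.2]

theorem not_between_of_cross_eq {N : ℕ} {x y z : X N} (hx : 0 < x.1.2) (hy : 0 < y.1.2)
    (hz : 0 < z.1.2) (h : cross x.1 y.1 = cross y.1 z.1) :
    ¬((fval x < fval z ∧ fval z < fval y) ∨ (fval y < fval z ∧ fval z < fval x)) := by
  rintro (⟨hxz, hzy⟩ | ⟨hyz, hzx⟩)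
  · have hxy := (fval_lt_fval_iff hx hy).1 (hxz.trans hzy)
    have := (fval_lt_fval_iff hz hy).1 hzy
    unfold cross at *
    linarith
  · have hyx := (fval_lt_fval_iff hy hx).1 (hyz.trans hzx)
    have := (fval_lt_fval_iff hy hz).1 hyz
    unfold cross at *
    linarith

namespace IsWellDirectedPath

variable {N n : ℕ} {P : ℕ → X N}

theorem denom_one (hP : IsWellDirectedPath N n P) : (P 1).1.2 = N := by
  have hadj := (hP.2.1 0 (Nat.zero_le n)).2
  rw [hP.1] at hadj
  have := (P 1).2.1
  simp only [infty, zero_add, mul_zero, mul_one, zero_sub, neg_eq_iff_eq_neg] at hadj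
  omega

theorem denom_pos (hP : IsWellDirectedPath N n P) {k : ℕ} (h1 : 1 ≤ k) (h2 : k ≤ n + 1) :
    0 < (P k).1.2 := by
  obtain ⟨j, rfl⟩ := Nat.exists_eq_add_of_le' h1
  exact lt_of_le_of_lt (P j).2.1 (hP.2.2.1 j (by omega))

theorem exists_step (hP : IsWellDirectedPath N n P) (hN : 0 < N) {i : ℕ} (h1 : 1 ≤ i)
    (h2 : i ≤ n) :
    ∃ a ε : ℤ, (ε = 1 ∨ ε = -1) ∧ (P (i + 1)).1 = a • (P i).1 + ε • (P (i - 1)).1 := by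
  obtain ⟨j, rfl⟩ := Nat.exists_eq_add_of_le' h1
  rw [Nat.add_sub_cancel]
  have hprev : cross (P j).1 (P (j + 1)).1 = N ∨ cross (P j).1 (P (j + 1)).1 = -N :=
    (hP.2.1 j (by omega)).2
  have hnext : cross (P (j + 1)).1 (P (j + 1 + 1)).1 = N ∨
      cross (P (j + 1)).1 (P (j + 1 + 1)).1 = -N := (hP.2.1 (j + 1) h2).2
  have hdvd : (N : ℤ) ∣ cross (P j).1 (P (j + 1 + 1)).1 :=
    dvd_sub (dvd_mul_of_dvd_right (P j).2.2.2.1 _)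
      (dvd_mul_of_dvd_left (P (j + 1 + 1)).2.2.2.1 _)
  apply exists_eq_smul_add_smul_of_cross
  · rcases hprev with h | h <;> rw [h] <;> omega
  · rcases hprev with h | h <;> rw [h] <;> simpa using hdvd
  · rcases hprev with h | h <;> rcases hnext with h' | h' <;> rw [h, h'] <;> simp

theorem one_le_coeff (hP : IsWellDirectedPath N n P) {i : ℕ} {a ε : ℤ} (h1 : 1 ≤ i)
    (h2 : i ≤ n) (hε : ε = 1 ∨ ε = -1)
    (hstep : (P (i + 1)).1 = a • (P i).1 + ε • (P (i - 1)).1) : 1 ≤ a ∧ 1 ≤ a + ε := by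
  obtain ⟨j, rfl⟩ := Nat.exists_eq_add_of_le' h1
  refine one_le_and_one_le_add_of_lt (P j).2.1 (hP.2.2.1 j (by omega)) (hP.2.2.1 (j + 1) h2)
    hε ?_
  simpa using congrArg Prod.snd hstep

theorem one_le_coeff_add_sign_next (hP : IsWellDirectedPath N n P) {i : ℕ} {a ε a' ε' : ℤ}
    (h1 : 1 ≤ i) (h2 : i < n) (ha : 1 ≤ a)
    (hstep : (P (i + 1)).1 = a • (P i).1 + ε • (P (i - 1)).1) (hε' : ε' = 1 ∨ ε' = -1)
    (hstep' : (P (i + 1 + 1)).1 = a' • (P (i + 1)).1 + ε' • (P i).1) : 1 ≤ a + ε' := by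
  obtain ⟨j, rfl⟩ := Nat.exists_eq_add_of_le' h1
  -- Otherwise `P j ~ P (j + 2)` and the turn at `P (j + 2)` keeps the orientation of the
  -- previous one, which a well directed path forbids.
  by_contra! hlt
  obtain ⟨rfl, rfl⟩ : a = 1 ∧ ε' = -1 := by omega
  rw [Nat.add_sub_cancel] at hstep
  have hskip : (FareyGraph N).Adj (P j) (P (j + 2)) := by
    refine ⟨fun he => ?_, ?_⟩
    · have := (hP.2.2.1 j (by omega)).trans (hP.2.2.1 (j + 1) (by omega))
      rw [he] at this
      exact lt_irrefl _ this
    · show cross _ (P (j + 1 + 1)).1 = N ∨ cross _ (P (j + 1 + 1)).1 = -N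
      rw [hstep, cross_smul_add_smul_left, one_mul]
      exact (hP.2.1 j (by omega)).2
  refine not_between_of_cross_eq (hP.denom_pos (by omega) (by omega))
    (hP.denom_pos (by omega) (by omega)) (hP.denom_pos (by omega) (by omega)) ?_
    (hP.2.2.2 j (by omega) hskip)
  rw [hstep', cross_smul_add_smul_right, neg_neg, one_mul]

end IsWellDirectedPath

/-- If `∞ = P 0 → P 1 → ⋯ → P (n+1) = x` is a well directed
path in `F_N` (`N > 1`), then there is a finite `F_N`-continued fraction (data
`b`, `(aᵢ)`, `(εᵢ)`) whose `i`-th convergent equals `Pᵢ` (paper index) for every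
`0 ≤ i ≤ n`; in particular its value is `x`. -/
theorem stmt13 (N n : ℕ) (hN : 1 < N) (P : ℕ → X N)
    (hP : IsWellDirectedPath N n P) :
    ∃ F : FCF N n, ∀ i, i ≤ n →
      F.p (i + 1) = (P (i + 1)).1.1 ∧ F.q (i + 1) = (P (i + 1)).1.2 := by
  have hstep : ∀ i, ∃ a ε : ℤ, 1 ≤ i → i ≤ n →
      (ε = 1 ∨ ε = -1) ∧ (P (i + 1)).1 = a • (P i).1 + ε • (P (i - 1)).1 := fun i => by
    by_cases hi : 1 ≤ i ∧ i ≤ n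
    · obtain ⟨a, ε, h⟩ := hP.exists_step (by omega) hi.1 hi.2
      exact ⟨a, ε, fun _ _ => h⟩
    · exact ⟨0, 0, fun h1 h2 => absurd ⟨h1, h2⟩ hi⟩
  choose a ε hstep using hstep
  have hcoeff : ∀ i, 1 ≤ i → i ≤ n → 1 ≤ a i ∧ 1 ≤ a i + ε i := fun i h1 h2 =>
    hP.one_le_coeff h1 h2 (hstep i h1 h2).1 (hstep i h1 h2).2
  have hP0 : (P 0).1 = (1, 0) := by rw [hP.1]; rfl
  refine ⟨{
      b := (P 1).1.1
      a := a
      ε := ε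
      p := fun k => (P k).1.1
      q := fun k => (P k).1.2
      hb := by simpa [hP.denom_one] using (P 1).2.2.1
      hp0 := congrArg Prod.fst hP0
      hq0 := congrArg Prod.snd hP0
      hp1 := rfl
      hq1 := hP.denom_one
      ha := fun i h1 h2 => (hcoeff i h1 h2).1
      hε := fun i h1 h2 => (hstep i h1 h2).1
      hrecp := fun i h1 h2 => by simpa using congrArg Prod.fst (hstep i h1 h2).2
      hrecq := fun i h1 h2 => by simpa using congrArg Prod.snd (hstep i h1 h2).2
      cond1 := fun i h1 h2 => hP.one_le_coeff_add_sign_next h1 h2 (hcoeff i h1 h2.le).1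
        (hstep i h1 h2.le).2 (hstep (i + 1) (by omega) h2).1
        (by simpa using (hstep (i + 1) (by omega) h2).2)
      cond2 := fun i h1 h2 => (hcoeff i h1 h2).2
      cond3 := fun i _ _ => (P (i + 1)).2.2.1 }, fun i _ => ⟨rfl, rfl⟩⟩
end

section
/- Let p be a prime, l ∈ ℕ, and let x ∈ X_{p^l}, x ≠ ∞, and a ∈ ℤ satisfy a/p^l < x < (a+1)/p^l with gcd(a,p) = 1 and gcd(a+1,p) = 1. Suppose the mediant (2a+1)/(2p^l) does not belong to X_{p^l} (i.e., gcd(2a+1, 2p^l) > 1). Then every well directed path from ∞ to x in F_{p^l} has P_0 = a/p^l if x < (2a+1)/(2p^l), and every well directed path from ∞ to x has P_0 = (a+1)/p^l if x > (2a+1)/(2p^l). -/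
/-!
Dividing the denominators by `N` (they are all multiples of `N`, and `P₀ = u₁/N` has
denominator exactly `N`), the vertices become `u i / m i` with `u (i+1) m i - m (i+1) u i = ±1`:
a path in the classical Farey graph with increasing denominators, starting at the integer `u₁`.
Writing `v i = (u i, m i)`, such a path never leaves the open Farey interval spanned by the two
parents `v j` and `v (j+1) - v j` of any of its vertices `v (j+1)`. For `j = 1` this interval is
`(u₁, u₁ ± 1/(m₂ - 1))` and contains `N x ∈ (a, a+1)`, so `u₁ ∈ {a, a+1}`; if `m₂ ≥ 3` it has
length at most `1/2`, so `N x` lies on the same side of `a + 1/2` as `u₁`. The remaining case `m₂ = 2`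
makes the second vertex the mediant `(2a+1)/(2N)`, which is not a vertex of `F_N` because
`gcd(2a+1, N) > 1`.
-/

/-- `u i / m i`, `j ≤ i ≤ T`, is a path in the Farey graph `F_1` with increasing positive
denominators. -/
def IsAscendingFareyPath (u m : ℕ → ℤ) (j T : ℕ) : Prop :=
  ∀ i, j ≤ i → i < T → 0 < m i ∧ m i < m (i + 1) ∧
    (u (i + 1) * m i - m (i + 1) * u i = 1 ∨ u (i + 1) * m i - m (i + 1) * u i = -1)

lemma exists_pos_combination_parents_step {u₀ u₁ u₂ m₀ m₁ m₂ uT mT α β : ℤ}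
    (hm₀ : 0 < m₀) (hm₀₁ : m₀ < m₁) (hm₁₂ : m₁ < m₂)
    (h₀₁ : u₁ * m₀ - m₁ * u₀ = 1 ∨ u₁ * m₀ - m₁ * u₀ = -1)
    (h₁₂ : u₂ * m₁ - m₂ * u₁ = 1 ∨ u₂ * m₁ - m₂ * u₁ = -1)
    (hα : 0 < α) (hβ : 0 < β)
    (hu : uT = α * u₁ + β * (u₂ - u₁)) (hm : mT = α * m₁ + β * (m₂ - m₁)) :
    ∃ α' β', 0 < α' ∧ 0 < β' ∧ uT = α' * u₀ + β' * (u₁ - u₀) ∧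
      mT = α' * m₀ + β' * (m₁ - m₀) := by
  set D := u₁ * m₀ - m₁ * u₀
  have hD : D * D = 1 := by rcases h₀₁ with h | h <;> rw [h] <;> norm_num
  -- Cramer's rule in the unimodular basis `(u₀, m₀), (u₁, m₁)`
  set c := D * (u₂ * m₀ - m₂ * u₀)
  set e := D * (u₂ * m₁ - m₂ * u₁) with he_def
  have hu₂ : u₂ = c * u₁ - e * u₀ := by linear_combination (-u₂) * hD
  have hm₂ : m₂ = c * m₁ - e * m₀ := by linear_combination (-m₂) * hD
  have hc : 1 ≤ c ∧ e ≤ c - 1 := by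
    have he : e = 1 ∨ e = -1 := by
      rcases h₀₁ with h | h <;> rcases h₁₂ with h' | h' <;> simp [he_def, h, h']
    rcases he with he | he <;> rw [he] at hm₂ ⊢ <;> constructor <;> nlinarith
  refine ⟨α + β * (c - 1 - e), α + β * (c - 1), ?_, ?_,
    by rw [hu, hu₂]; ring, by rw [hm, hm₂]; ring⟩
  · nlinarith [mul_nonneg hβ.le (sub_nonneg.mpr hc.2)]
  · nlinarith [mul_nonneg hβ.le (sub_nonneg.mpr hc.1)]

theorem IsAscendingFareyPath.exists_pos_combination {u m : ℕ → ℤ} {j T : ℕ}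
    (h : IsAscendingFareyPath u m j T) (hjT : j < T) :
    ∃ α β, 0 < α ∧ 0 < β ∧ u T = α * u j + β * (u (j + 1) - u j) ∧
      m T = α * m j + β * (m (j + 1) - m j) := by
  obtain ⟨k, rfl⟩ : ∃ k, T = j + 1 + k := ⟨T - (j + 1), by omega⟩
  induction k generalizing j with
  | zero => exact ⟨1, 1, one_pos, one_pos, by ring, by ring⟩
  | succ k ih =>
    obtain ⟨α, β, hα, hβ, hu, hm⟩ :=
      ih (j := j + 1) (fun i hi hiT => h i (by omega) (by omega)) (by omega)
    obtain ⟨hm₀, hm₀₁, h₀₁⟩ := h j le_rfl (by omega)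
    obtain ⟨-, hm₁₂, h₁₂⟩ := h (j + 1) (by omega) (by omega)
    rw [show j + 1 + (k + 1) = j + 1 + 1 + k by omega]
    exact exists_pos_combination_parents_step hm₀ hm₀₁ hm₁₂ h₀₁ h₁₂ hα hβ hu hm

theorem IsAscendingFareyPath.first_eq {u m : ℕ → ℤ} {n : ℕ} {a : ℤ}
    (h : IsAscendingFareyPath u m 1 (n + 1)) (hm₁ : m 1 = 1)
    (hmed : 2 * u 2 ≠ (2 * a + 1) * m 2)
    (ha : a * m (n + 1) < u (n + 1)) (ha' : u (n + 1) < (a + 1) * m (n + 1)) :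
    (u 1 = a ∧ 2 * u (n + 1) < (2 * a + 1) * m (n + 1)) ∨
      (u 1 = a + 1 ∧ (2 * a + 1) * m (n + 1) < 2 * u (n + 1)) := by
  rcases n.eq_zero_or_pos with rfl | hn
  · rw [hm₁] at ha ha'
    omega
  obtain ⟨α, β, hα, hβ, hu, hm⟩ := h.exists_pos_combination (by omega)
  obtain ⟨-, hm₁₂, h₁₂⟩ := h 1 le_rfl (by omega)
  simp only [Nat.reduceAdd, hm₁, mul_one] at hu hm hm₁₂ h₁₂
  set y := u (n + 1)
  set M := m (n + 1)
  have hM : β < M := by nlinarith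
  have hm₂ : m 2 = 2 ∨ 3 ≤ m 2 := by omega
  rcases h₁₂ with h₁₂ | h₁₂
  · have hy : y = u 1 * M + β := by rw [hu, hm]; linear_combination β * h₁₂
    have h₁ : u 1 = a := by
      have : u 1 < a + 1 := lt_of_mul_lt_mul_right (by linarith) (by linarith : 0 ≤ M)
      have : a < u 1 + 1 := lt_of_mul_lt_mul_right (by linarith) (by linarith : 0 ≤ M)
      omega
    refine .inl ⟨h₁, ?_⟩
    rcases hm₂ with hm₂ | hm₂
    · exact absurd (by rw [hm₂] at h₁₂ ⊢; linear_combination 2 * h₁₂ + 4 * h₁) hmed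
    · nlinarith
  · have hy : y = u 1 * M - β := by rw [hu, hm]; linear_combination β * h₁₂
    have h₁ : u 1 = a + 1 := by
      have : u 1 - 1 < a + 1 := lt_of_mul_lt_mul_right (by linarith) (by linarith : 0 ≤ M)
      have : a < u 1 := lt_of_mul_lt_mul_right (by linarith) (by linarith : 0 ≤ M)
      omega
    refine .inr ⟨h₁, ?_⟩
    rcases hm₂ with hm₂ | hm₂
    · exact absurd (by rw [hm₂] at h₁₂ ⊢; linear_combination 2 * h₁₂ + 4 * h₁) hmed
    · nlinarith

lemma isCoprime_two_mul_add_one_two (a : ℤ) : IsCoprime (2 * a + 1) 2 := ⟨1, -a, by ring⟩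

namespace X

variable {N : ℕ} (v : X N)

lemma denom_eq : v.1.2 = N * (v.1.2 / N) :=
  (Int.mul_ediv_cancel' v.2.2.2.1).symm

lemma pos_of_denom_pos (hv : 0 < v.1.2) : (0 : ℤ) < N ∧ 0 < v.1.2 / N :=
  (pos_and_pos_or_neg_and_neg_of_mul_pos (v.denom_eq ▸ hv)).resolve_right (by omega)

lemma fval_eq : fval v = v.1.1 / ((N * (v.1.2 / N) : ℤ) : ℚ) := by
  rw [← denom_eq, fval]

lemma num_div_lt_fval_iff (hv : 0 < v.1.2) {c d : ℤ} (hd : 0 < d) :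
    (c : ℚ) / (d * N) < fval v ↔ c * (v.1.2 / N) < v.1.1 * d := by
  obtain ⟨hN, hm⟩ := v.pos_of_denom_pos hv
  rw [fval_eq, div_lt_div_iff₀ (by exact_mod_cast mul_pos hd hN)
    (by exact_mod_cast mul_pos hN hm)]
  norm_cast
  constructor <;> intro h <;> nlinarith

lemma fval_lt_num_div_iff (hv : 0 < v.1.2) {c d : ℤ} (hd : 0 < d) :
    fval v < (c : ℚ) / (d * N) ↔ v.1.1 * d < c * (v.1.2 / N) := by
  obtain ⟨hN, hm⟩ := v.pos_of_denom_pos hv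
  rw [fval_eq, div_lt_div_iff₀ (by exact_mod_cast mul_pos hN hm)
    (by exact_mod_cast mul_pos hd hN)]
  norm_cast
  constructor <;> intro h <;> nlinarith

lemma isCoprime_of_two_mul_num_eq {a : ℤ} (h : 2 * v.1.1 = (2 * a + 1) * (v.1.2 / N)) :
    IsCoprime (2 * a + 1) N := by
  have hdvd : 2 * a + 1 ∣ v.1.1 :=
    (isCoprime_two_mul_add_one_two a).dvd_of_dvd_mul_left ⟨_, h⟩
  exact (v.2.2.1.of_isCoprime_of_dvd_right v.2.2.2.1).of_isCoprime_of_dvd_left hdvd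

end X

section PathFromInfty

variable {N n : ℕ} {P : ℕ → X N}

lemma denom_pos_of_path (hP0 : P 0 = infty N)
    (hinc : ∀ i, i ≤ n → (P i).1.2 < (P (i + 1)).1.2) :
    ∀ i, 1 ≤ i → i ≤ n + 1 → 0 < (P i).1.2 := by
  intro i hi hin
  induction i with
  | zero => omega
  | succ i ih =>
    have hlt := hinc i (by omega)
    rcases i.eq_zero_or_pos with rfl | hi0
    · simpa [hP0, infty] using hlt
    · exact (ih hi0 (by omega)).trans hlt

lemma denom_one_of_path (hP0 : P 0 = infty N) (hadj : (FareyGraph N).Adj (P 0) (P 1))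
    (hpos : 0 < (P 1).1.2) : (P 1).1.2 = N := by
  obtain ⟨-, h | h⟩ := hadj <;> simp only [hP0, infty, mul_zero, mul_one, zero_sub] at h <;> omega

theorem isAscendingFareyPath_of_path (hP0 : P 0 = infty N)
    (hadj : ∀ i, i ≤ n → (FareyGraph N).Adj (P i) (P (i + 1)))
    (hinc : ∀ i, i ≤ n → (P i).1.2 < (P (i + 1)).1.2) :
    IsAscendingFareyPath (fun i => (P i).1.1) (fun i => (P i).1.2 / N) 1 (n + 1) := by
  have hpos := denom_pos_of_path hP0 hinc
  have hN : (0 : ℤ) < N := (X.pos_of_denom_pos _ (hpos 1 le_rfl (by omega))).1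
  intro i hi hin
  have hq := (P i).denom_eq
  have hq' := (P (i + 1)).denom_eq
  refine ⟨((P i).pos_of_denom_pos (hpos i hi (by omega))).2,
    lt_of_mul_lt_mul_left (hq ▸ hq' ▸ hinc i (by omega)) hN.le, ?_⟩
  rcases (hadj i (by omega)).2 with h | h <;> [left; right] <;>
    exact mul_left_cancel₀ hN.ne'
      (by linear_combination h - (P (i + 1)).1.1 * hq + (P i).1.1 * hq')

theorem first_vertex_eq_of_path {a : ℤ} (hP0 : P 0 = infty N)
    (hadj : ∀ i, i ≤ n → (FareyGraph N).Adj (P i) (P (i + 1)))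
    (hinc : ∀ i, i ≤ n → (P i).1.2 < (P (i + 1)).1.2)
    (hmed : ¬IsCoprime (2 * a + 1) (N : ℤ))
    (hax : (a : ℚ) / N < fval (P (n + 1))) (hxa : fval (P (n + 1)) < ((a : ℚ) + 1) / N) :
    (fval (P (n + 1)) < (2 * (a : ℚ) + 1) / (2 * N) → (P 1).1 = (a, (N : ℤ))) ∧
      ((2 * (a : ℚ) + 1) / (2 * N) < fval (P (n + 1)) → (P 1).1 = (a + 1, (N : ℤ))) := by
  have hpos := denom_pos_of_path hP0 hinc
  have hT := hpos (n + 1) (by omega) le_rfl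
  have hq₁ := denom_one_of_path hP0 (hadj 0 n.zero_le) (hpos 1 le_rfl (by omega))
  have hm₁ : (P 1).1.2 / N = 1 := by
    rw [hq₁]; exact Int.ediv_self (hq₁ ▸ (hpos 1 le_rfl (by omega)).ne')
  have hstart := (isAscendingFareyPath_of_path hP0 hadj hinc).first_eq hm₁
    (fun h => hmed ((P 2).isCoprime_of_two_mul_num_eq h))
    (by simpa using (X.num_div_lt_fval_iff _ hT one_pos).1 (by simpa using hax))
    (by simpa using (X.fval_lt_num_div_iff _ hT one_pos).1 (by simpa using hxa))
  constructor <;> intro h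
  · have h' := (X.fval_lt_num_div_iff _ hT (c := 2 * a + 1) two_pos).1 (by simpa using h)
    exact Prod.ext (hstart.resolve_right (by omega)).1 hq₁
  · have h' := (X.num_div_lt_fval_iff _ hT (c := 2 * a + 1) two_pos).1 (by simpa using h)
    exact Prod.ext (hstart.resolve_left (by omega)).1 hq₁

end PathFromInfty

theorem stmt16_general (p l : ℕ)
    (x : X (p ^ l)) (a : ℤ)
    (hax : (a : ℚ) / (p : ℚ) ^ l < fval x)
    (hxa : fval x < ((a : ℚ) + 1) / (p : ℚ) ^ l)
    (hmed : 1 < Int.gcd (2 * a + 1) (2 * (p : ℤ) ^ l)) :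
    ∀ (n : ℕ) (P : ℕ → X (p ^ l)),
      IsWellDirectedPath (p ^ l) n P → P (n + 1) = x →
      (fval x < (2 * (a : ℚ) + 1) / (2 * (p : ℚ) ^ l) →
        (P 1).1 = (a, (p : ℤ) ^ l)) ∧
      ((2 * (a : ℚ) + 1) / (2 * (p : ℚ) ^ l) < fval x →
        (P 1).1 = (a + 1, (p : ℤ) ^ l)) := by
  rintro n P ⟨hP0, hadj, hinc, -⟩ rfl
  have hmed' : ¬IsCoprime (2 * a + 1) ((p ^ l : ℕ) : ℤ) := fun h =>
    hmed.ne' <| Int.isCoprime_iff_gcd_eq_one.mp <|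
      (isCoprime_two_mul_add_one_two a).mul_right (by exact_mod_cast h)
  simpa using first_vertex_eq_of_path hP0 hadj hinc hmed' (by simpa using hax) (by simpa using hxa)

/-- Let `p` be a prime, `l ≥ 1`, `x ∈ X_{p^l}`, `x ≠ ∞`, and
`a ∈ ℤ` with `a/p^l < x < (a+1)/p^l`, `gcd(a, p) = 1 = gcd(a+1, p)`.  If the
mediant `(2a+1)/(2p^l)` is not in `X_{p^l}` (i.e. `gcd(2a+1, 2p^l) > 1`), then
every well directed path from `∞` to `x` in `F_{p^l}` has first vertex
`P₀ = a/p^l` if `x < (2a+1)/(2p^l)`, and `P₀ = (a+1)/p^l` if `x > (2a+1)/(2p^l)`. -/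
theorem stmt16 (p l : ℕ) (hp : p.Prime) (hl : 1 ≤ l)
    (x : X (p ^ l)) (hx : x ≠ infty (p ^ l)) (a : ℤ)
    (hax : (a : ℚ) / (p : ℚ) ^ l < fval x)
    (hxa : fval x < ((a : ℚ) + 1) / (p : ℚ) ^ l)
    (hcop1 : IsCoprime a (p : ℤ)) (hcop2 : IsCoprime (a + 1) (p : ℤ))
    (hmed : 1 < Int.gcd (2 * a + 1) (2 * (p : ℤ) ^ l)) :
    ∀ (n : ℕ) (P : ℕ → X (p ^ l)),
      IsWellDirectedPath (p ^ l) n P → P (n + 1) = x →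
      (fval x < (2 * (a : ℚ) + 1) / (2 * (p : ℚ) ^ l) →
        (P 1).1 = (a, (p : ℤ) ^ l)) ∧
      ((2 * (a : ℚ) + 1) / (2 * (p : ℚ) ^ l) < fval x →
        (P 1).1 = (a + 1, (p : ℤ) ^ l)) :=
  stmt16_general p l x a hax hxa hmed
end

section
/- For every l ∈ ℕ and every x ∈ X_{2^l} with x ≠ ∞, every well directed path from ∞ to x in F_{2^l} passes through the vertex b/2^l as its first vertex after ∞, where b = 2·⌊2^{l−1} x⌋ + 1. -/
/-!
The first vertex after `∞ = 1/0` is `a/2^l`, and every later denominator is a multiple of `2^l`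
exceeding the previous one, so the `i`-th is at least `i·2^l`. Adjacent vertices `p/q`, `r/s`
differ by `2^l/(q s)`, so the steps from `a/2^l` onwards telescope to less than `1/2^l`. As `a` is
coprime to `2^l` it is odd, and `x` lies strictly between `(a-1)/2^l` and `(a+1)/2^l`, which
determines `a` from `x`.
-/

lemma Int.floor_mul_eq_of_abs_sub_lt {K : Type*} [Field K] [LinearOrder K] [IsStrictOrderedRing K]
    [FloorRing K] {M x : K} (m : ℤ) (hM : 0 < M)
    (h : |x - (2 * m + 1) / (2 * M)| < 1 / (2 * M)) : ⌊M * x⌋ = m := by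
  rw [abs_sub_lt_iff, sub_lt_iff_lt_add', ← add_div, sub_lt_comm, ← sub_div] at h
  rw [Int.floor_eq_iff]
  constructor
  · have := (div_lt_iff₀' (by positivity)).1 h.2
    linarith
  · have := (lt_div_iff₀' (by positivity)).1 h.1
    linarith

namespace X

variable {N : ℕ}

lemma denom_nonneg (v : X N) : 0 ≤ v.1.2 := v.2.1

lemma natCast_dvd_denom (v : X N) : (N : ℤ) ∣ v.1.2 := v.2.2.2.1

end X

namespace FareyGraph

variable {N : ℕ}

lemma denom_eq_of_adj_infty {w : X N} (h : (FareyGraph N).Adj (infty N) w) : w.1.2 = N := by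
  have := w.denom_nonneg
  rcases h.2 with h | h <;> simp only [infty, mul_zero, mul_one, zero_sub] at h <;> omega

lemma abs_fval_sub_of_adj {v w : X N} (h : (FareyGraph N).Adj v w) (hv : 0 < v.1.2)
    (hw : 0 < w.1.2) : |fval w - fval v| = N / (v.1.2 * w.1.2) := by
  have hvq : (v.1.2 : ℚ) ≠ 0 := by positivity
  have hwq : (w.1.2 : ℚ) ≠ 0 := by positivity
  have hdiff : fval w - fval v = ((w.1.1 * v.1.2 - w.1.2 * v.1.1 : ℤ) : ℚ) / (v.1.2 * w.1.2) := by
    rw [fval, fval]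
    field_simp
    push_cast
    ring
  rw [hdiff, abs_div, abs_of_pos (by positivity : (0 : ℚ) < v.1.2 * w.1.2)]
  rcases h.2 with h | h <;> simp [h]

end FareyGraph

structure IsAscendingPath (N n : ℕ) (P : ℕ → X N) : Prop where
  start : P 0 = infty N
  adj : ∀ i, i ≤ n → (FareyGraph N).Adj (P i) (P (i + 1))
  denom_lt : ∀ i, i ≤ n → (P i).1.2 < (P (i + 1)).1.2

lemma IsWellDirectedPath.isAscendingPath {N n : ℕ} {P : ℕ → X N}
    (hP : IsWellDirectedPath N n P) : IsAscendingPath N n P :=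
  ⟨hP.1, hP.2.1, hP.2.2.1⟩

namespace IsAscendingPath

variable {N n : ℕ} {P : ℕ → X N}

lemma denom_one (hP : IsAscendingPath N n P) : (P 1).1.2 = N :=
  FareyGraph.denom_eq_of_adj_infty (hP.start ▸ hP.adj 0 n.zero_le)

lemma mul_le_denom (hP : IsAscendingPath N n P) {i : ℕ} (hi : 1 ≤ i) (hin : i ≤ n + 1) :
    (i : ℤ) * N ≤ (P i).1.2 := by
  induction i, hi using Nat.le_induction with
  | base => simp [hP.denom_one]
  | succ j _ ih =>
    have hlt := hP.denom_lt j (by omega)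
    have hstep : (N : ℤ) ≤ (P (j + 1)).1.2 - (P j).1.2 :=
      Int.le_of_dvd (sub_pos.2 hlt) (dvd_sub (P (j + 1)).natCast_dvd_denom (P j).natCast_dvd_denom)
    push_cast
    linarith [ih (by omega)]

lemma abs_fval_succ_sub_le (hP : IsAscendingPath N n P) (hN : 0 < N) {i : ℕ} (hi : 1 ≤ i)
    (hin : i ≤ n) :
    |fval (P (i + 1)) - fval (P i)| ≤ (1 / i - 1 / (i + 1)) / N := by
  have hq : (i : ℚ) * N ≤ (P i).1.2 := by exact_mod_cast hP.mul_le_denom hi (by omega)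
  have hs : ((i : ℚ) + 1) * N ≤ (P (i + 1)).1.2 := by
    exact_mod_cast hP.mul_le_denom (i := i + 1) (by omega) (by omega)
  have hiN : (0 : ℚ) < i * N := by positivity
  have hq0 : 0 < (P i).1.2 := by exact_mod_cast hiN.trans_le hq
  rw [FareyGraph.abs_fval_sub_of_adj (hP.adj i hin) hq0 (hq0.trans (hP.denom_lt i hin))]
  calc (N : ℚ) / ((P i).1.2 * (P (i + 1)).1.2)
      ≤ N / (i * N * ((i + 1) * N)) := by gcongr
    _ = (1 / i - 1 / (i + 1)) / N := by field_simp; ring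

lemma abs_fval_sub_fval_one_le (hP : IsAscendingPath N n P) (hN : 0 < N) {m : ℕ}
    (hm : m ≤ n) : |fval (P (m + 1)) - fval (P 1)| ≤ (1 - 1 / (m + 1)) / N := by
  induction m with
  | zero => simp
  | succ j ih =>
    have hstep := hP.abs_fval_succ_sub_le hN (i := j + 1) (by omega) hm
    calc |fval (P (j + 1 + 1)) - fval (P 1)|
        ≤ |fval (P (j + 1 + 1)) - fval (P (j + 1))| + |fval (P (j + 1)) - fval (P 1)| :=
          abs_sub_le _ _ _
      _ ≤ (1 / (j + 1) - 1 / (j + 1 + 1)) / N + (1 - 1 / (j + 1)) / N := by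
          push_cast at hstep
          gcongr
          exact ih (by omega)
      _ = (1 - 1 / ((j + 1 : ℕ) + 1)) / N := by push_cast; ring

lemma abs_fval_sub_fval_one_lt (hP : IsAscendingPath N n P) (hN : 0 < N) :
    |fval (P (n + 1)) - fval (P 1)| < 1 / N := by
  refine (hP.abs_fval_sub_fval_one_le hN le_rfl).trans_lt ?_
  gcongr
  exact sub_lt_self 1 (by positivity)

end IsAscendingPath

theorem stmt17_general (l : ℕ) (hl : 1 ≤ l) (x : X (2 ^ l))
    (n : ℕ) (P : ℕ → X (2 ^ l))
    (hP : IsWellDirectedPath (2 ^ l) n P) (hlast : P (n + 1) = x) :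
    (P 1).1 = (2 * ⌊(2 : ℚ) ^ (l - 1) * fval x⌋ + 1, (2 : ℤ) ^ l) := by
  have hA := hP.isAscendingPath
  have hq : (P 1).1.2 = 2 ^ l := by simpa using hA.denom_one
  have hcop : IsCoprime (P 1).1.1 (2 ^ l) := hq ▸ (P 1).2.2.1
  obtain ⟨m, hm⟩ : Odd (P 1).1.1 :=
    Int.isCoprime_two_right.1 ((IsCoprime.pow_right_iff hl).1 hcop)
  have h2l : (2 : ℚ) ^ l = 2 * 2 ^ (l - 1) := by rw [← pow_succ', Nat.sub_add_cancel hl]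
  have hfirst : fval (P 1) = (2 * m + 1) / (2 * 2 ^ (l - 1)) := by
    rw [fval, hq, hm, ← h2l]
    norm_cast
  have hclose := hA.abs_fval_sub_fval_one_lt (by positivity)
  rw [hlast, hfirst, Nat.cast_pow, Nat.cast_ofNat, h2l] at hclose
  rw [Int.floor_mul_eq_of_abs_sub_lt m (by positivity) hclose, ← hm, ← hq]

/-- For every `l ≥ 1` and every `x ≠ ∞` in `X_{2^l}`, every
well directed path from `∞` to `x` in `F_{2^l}` has first vertex (after `∞`)
`b/2^l` where `b = 2·⌊2^(l−1)·x⌋ + 1`. -/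
theorem stmt17 (l : ℕ) (hl : 1 ≤ l) (x : X (2 ^ l)) (hx : x ≠ infty (2 ^ l))
    (n : ℕ) (P : ℕ → X (2 ^ l))
    (hP : IsWellDirectedPath (2 ^ l) n P) (hlast : P (n + 1) = x) :
    (P 1).1 = (2 * ⌊(2 : ℚ) ^ (l - 1) * fval x⌋ + 1, (2 : ℤ) ^ l) :=
  stmt17_general l hl x n P hP hlast
end

section
/- Every real number x has an F_{p^l}-continued fraction expansion: for every prime p and every l ∈ ℕ, there exist an integer b coprime to p and (finite or infinite) sequences of positive integers (a_i) and signs (ε_i) ∈ {1,−1} satisfying the F_{p^l}-continued fraction conditions such that the sequence of convergents p_n/q_n converges to x (and equals x at the last index in the finite case). -/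
/-- An infinite `F_N`-continued fraction `1/(0+) N/(b+) ε₁/(a₁+) ε₂/(a₂+) ⋯`,
with the same index shift as `FCF`: `p (i+1) / q (i+1)` is the paper's `i`-th
convergent `p_i/q_i`. -/
structure FCFInf (N : ℕ) where
  b : ℤ
  a : ℕ → ℤ
  ε : ℕ → ℤ
  p : ℕ → ℤ
  q : ℕ → ℤ
  hb : IsCoprime b (N : ℤ)
  hp0 : p 0 = 1
  hq0 : q 0 = 0
  hp1 : p 1 = b
  hq1 : q 1 = N
  ha : ∀ i, 1 ≤ i → 1 ≤ a i
  hε : ∀ i, 1 ≤ i → ε i = 1 ∨ ε i = -1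
  hrecp : ∀ i, 1 ≤ i → p (i + 1) = a i * p i + ε i * p (i - 1)
  hrecq : ∀ i, 1 ≤ i → q (i + 1) = a i * q i + ε i * q (i - 1)
  cond1 : ∀ i, 1 ≤ i → 1 ≤ a i + ε (i + 1)
  cond2 : ∀ i, 1 ≤ i → 1 ≤ a i + ε i
  cond3 : ∀ i, 1 ≤ i → IsCoprime (p (i + 1)) (q (i + 1))

/-!
The expansion comes from a greedy algorithm on the complete quotients of
`N x = b + ε₁/t₁`, `tᵢ = aᵢ + εᵢ₊₁/tᵢ₊₁`. Since `|p_{i-1} q_i - p_i q_{i-1}| = N = p^l`, a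
convergent is reduced as soon as `p` does not divide both its numerator and its denominator.
The digit is `⌊t⌋` unless the resulting convergent is divisible by `p`; then it is `⌊t⌋ + 1`
with next sign `-1`, and the new convergent is reduced because the two candidates differ by
the current, reduced, convergent. After a sign `-1` the digit must be at least `2`; when
`t < 2` the digit `2` is forced, and it is reduced because the digit `1` would reproduce the
candidate rejected one step earlier (`Primitive.blocked_one`). An integral complete quotient
ends the expansion when its floor is accepted; otherwise the next complete quotient is `1`
with sign `-1`, followed by the digits `2` forever. While the expansion goes on, all complete
quotients are `≥ 1`, the denominators grow, and `|x - p_i/q_i| ≤ N / q_i`.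
-/

open Filter Topology

namespace FCFExpansion

theorem isCoprime_of_abs_sub_eq_prime_pow {p l : ℕ} (hp : p.Prime) {a b u v : ℤ}
    (h : |u * b - a * v| = ((p ^ l : ℕ) : ℤ)) (hab : ¬((p : ℤ) ∣ a ∧ (p : ℤ) ∣ b)) :
    IsCoprime a b := by
  rw [Int.isCoprime_iff_gcd_eq_one]
  have hdvd : Int.gcd a b ∣ p ^ l := by
    rw [← Int.natCast_dvd_natCast, ← h, dvd_abs]
    exact dvd_sub ((Int.gcd_dvd_right a b).mul_left u) ((Int.gcd_dvd_left a b).mul_right v)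
  refine Nat.Coprime.eq_one_of_dvd (Nat.Coprime.pow_right l ?_) hdvd
  refine Nat.coprime_comm.1 ((hp.coprime_iff_not_dvd).2 fun hpg => hab ⟨?_, ?_⟩)
  · exact (Int.natCast_dvd_natCast.2 hpg).trans (Int.gcd_dvd_left a b)
  · exact (Int.natCast_dvd_natCast.2 hpg).trans (Int.gcd_dvd_right a b)

/-- A state of the algorithm: `(pm, qm)` and `(pc, qc)` are the previous and the current
convergent, `e` is the sign attached to the next digit and `t` the current complete quotient. -/
structure State where
  pm : ℤ
  qm : ℤ
  pc : ℤ
  qc : ℤ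
  e : ℤ
  t : ℝ

namespace State

variable (p : ℕ) (s : State)

def Blocked (a : ℤ) : Prop :=
  (p : ℤ) ∣ a * s.pc + s.e * s.pm ∧ (p : ℤ) ∣ a * s.qc + s.e * s.qm

open Classical in
noncomputable def digit : ℤ :=
  if s.e = -1 ∧ s.t < 2 then 2
  else if s.Blocked p ⌊s.t⌋ then ⌊s.t⌋ + 1 else ⌊s.t⌋

/-- Chooses the digit `a` and rewrites `t = a + e' / t'` with `e' = ±1`, `t' = |t - a|⁻¹`. -/
noncomputable def next : State where
  pm := s.pc
  qm := s.qc
  pc := s.digit p * s.pc + s.e * s.pm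
  qc := s.digit p * s.qc + s.e * s.qm
  e := if (s.digit p : ℝ) ≤ s.t then 1 else -1
  t := |s.t - s.digit p|⁻¹

/-- At a terminal step `(s.next p).t` is the junk value `0⁻¹ = 0`. -/
def Terminal : Prop := (s.digit p : ℝ) = s.t

def Represents (x : ℝ) : Prop :=
  x * (s.t * s.qc + s.e * s.qm) = s.t * s.pc + s.e * s.pm

structure Primitive (N : ℕ) : Prop where
  abs_det : |s.pm * s.qc - s.pc * s.qm| = N
  sign : s.e = 1 ∨ s.e = -1
  not_dvd : ¬((p : ℤ) ∣ s.pc ∧ (p : ℤ) ∣ s.qc)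
  blocked_one : s.e = -1 → s.Blocked p 1

structure Admissible : Prop where
  one_le_t : 1 ≤ s.t
  qm_nonneg : 0 ≤ s.qm
  qm_le_qc : s.qm ≤ s.qc
  qc_pos : 0 < s.qc
  qm_lt_qc : s.e = -1 → s.qm < s.qc

@[simp] theorem next_pm : (s.next p).pm = s.pc := rfl
@[simp] theorem next_qm : (s.next p).qm = s.qc := rfl
@[simp] theorem next_pc : (s.next p).pc = s.digit p * s.pc + s.e * s.pm := rfl
@[simp] theorem next_qc : (s.next p).qc = s.digit p * s.qc + s.e * s.qm := rfl

theorem digit_cases :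
    (s.e = -1 ∧ s.t < 2) ∧ s.digit p = 2 ∨
    ¬(s.e = -1 ∧ s.t < 2) ∧ s.Blocked p ⌊s.t⌋ ∧ s.digit p = ⌊s.t⌋ + 1 ∨
    ¬(s.e = -1 ∧ s.t < 2) ∧ ¬s.Blocked p ⌊s.t⌋ ∧ s.digit p = ⌊s.t⌋ := by
  unfold digit
  split_ifs with hforced hblocked
  · exact Or.inl ⟨hforced, rfl⟩
  · exact Or.inr (Or.inl ⟨hforced, hblocked, rfl⟩)
  · exact Or.inr (Or.inr ⟨hforced, hblocked, rfl⟩)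

theorem next_e_eq_one_of_digit_le (h : (s.digit p : ℝ) ≤ s.t) : (s.next p).e = 1 :=
  if_pos h

theorem next_e_eq_one_or_neg_one : (s.next p).e = 1 ∨ (s.next p).e = -1 := by
  simp only [next]
  split_ifs
  exacts [Or.inl rfl, Or.inr rfl]

theorem next_e_mul_abs : ((s.next p).e : ℝ) * |s.t - s.digit p| = s.t - s.digit p := by
  simp only [next]
  split_ifs with h
  · rw [Int.cast_one, one_mul, abs_of_nonneg (sub_nonneg.2 h)]
  · rw [abs_of_neg (sub_neg.2 (not_le.1 h))]
    push_cast
    ring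

theorem next_t_mul (hT : ¬s.Terminal p) : (s.next p).t * (s.t - s.digit p) = (s.next p).e := by
  have hne : |s.t - s.digit p| ≠ 0 := abs_ne_zero.2 (sub_ne_zero.2 (Ne.symm hT))
  calc (s.next p).t * (s.t - s.digit p)
      = |s.t - s.digit p|⁻¹ * ((s.next p).e * |s.t - s.digit p|) := by
        rw [s.next_e_mul_abs p]; rfl
    _ = (s.next p).e := by field_simp

theorem Represents.next {x : ℝ} (hx : s.Represents x) (hT : ¬s.Terminal p) :
    (s.next p).Represents x := by
  have ht := s.next_t_mul p hT
  unfold Represents at hx ⊢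
  simp only [next_pc, next_qc, next_pm, next_qm, Int.cast_add, Int.cast_mul]
  linear_combination (s.next p).t * hx - (x * s.qc - s.pc) * ht

theorem Represents.mul_next_qc {x : ℝ} (hx : s.Represents x) (hT : s.Terminal p) :
    x * (s.next p).qc = (s.next p).pc := by
  unfold Represents at hx
  rw [← hT] at hx
  rw [next_qc, next_pc]
  push_cast
  linear_combination hx

theorem Represents.div_next_eq {x : ℝ} (hx : s.Represents x) (hT : s.Terminal p)
    (hred : ¬((p : ℤ) ∣ (s.next p).pc ∧ (p : ℤ) ∣ (s.next p).qc)) :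
    ((s.next p).pc : ℝ) / (s.next p).qc = x := by
  have h := hx.mul_next_qc p s hT
  by_cases hq : (s.next p).qc = 0
  · rw [hq, Int.cast_zero, mul_zero, eq_comm, Int.cast_eq_zero] at h
    exact absurd ⟨h ▸ dvd_zero _, hq ▸ dvd_zero _⟩ hred
  · rw [div_eq_iff (Int.cast_ne_zero.2 hq), ← h, mul_comm]

theorem not_blocked_add_one {a : ℤ} (hs : ¬((p : ℤ) ∣ s.pc ∧ (p : ℤ) ∣ s.qc))
    (ha : s.Blocked p a) : ¬s.Blocked p (a + 1) := by
  rintro ⟨hpc, hqc⟩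
  have key (u v : ℤ) : (a + 1) * u + s.e * v - (a * u + s.e * v) = u := by ring
  exact hs ⟨key s.pc s.pm ▸ dvd_sub hpc ha.1, key s.qc s.qm ▸ dvd_sub hqc ha.2⟩

theorem not_blocked_digit (hs : ¬((p : ℤ) ∣ s.pc ∧ (p : ℤ) ∣ s.qc))
    (h1 : s.e = -1 → s.Blocked p 1) : ¬s.Blocked p (s.digit p) := by
  rcases s.digit_cases p with ⟨⟨he, -⟩, hd⟩ | ⟨-, hb, hd⟩ | ⟨-, hb, hd⟩ <;> rw [hd]
  · simpa using s.not_blocked_add_one p hs (h1 he)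
  · exact s.not_blocked_add_one p hs hb
  · exact hb

theorem blocked_digit_sub_one (h1 : s.e = -1 → s.Blocked p 1) (he : (s.next p).e = -1) :
    s.Blocked p (s.digit p - 1) := by
  rcases s.digit_cases p with ⟨⟨he', -⟩, hd⟩ | ⟨-, hb, hd⟩ | ⟨-, -, hd⟩
  · simpa [hd] using h1 he'
  · simpa [hd] using hb
  · have := s.next_e_eq_one_of_digit_le p (by rw [hd]; exact Int.floor_le s.t)
    omega

theorem blocked_next_one_iff (he : (s.next p).e = -1) :
    (s.next p).Blocked p 1 ↔ s.Blocked p (s.digit p - 1) := by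
  simp only [Blocked, next_pc, next_qc, next_pm, next_qm, he]
  ring_nf

theorem Primitive.next {N : ℕ} (h : s.Primitive p N) : (s.next p).Primitive p N where
  abs_det := by
    have habs : |s.e| = 1 := by rcases h.sign with he | he <;> simp [he]
    rw [← h.abs_det, next_pm, next_qm, next_pc, next_qc,
      show s.pc * (s.digit p * s.qc + s.e * s.qm) - (s.digit p * s.pc + s.e * s.pm) * s.qc
        = -s.e * (s.pm * s.qc - s.pc * s.qm) by ring, abs_mul, abs_neg, habs, one_mul]
  sign := s.next_e_eq_one_or_neg_one p
  not_dvd := s.not_blocked_digit p h.not_dvd h.blocked_one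
  blocked_one he := (s.blocked_next_one_iff p he).2 (s.blocked_digit_sub_one p h.blocked_one he)

theorem abs_sub_digit_le_one (h : s.e = -1 → 1 ≤ s.t) : |s.t - s.digit p| ≤ 1 := by
  have hfl := Int.floor_le s.t
  have hfu := Int.lt_floor_add_one s.t
  rw [abs_le]
  rcases s.digit_cases p with ⟨⟨he, ht⟩, hd⟩ | ⟨-, -, hd⟩ | ⟨-, -, hd⟩ <;> rw [hd] <;>
    push_cast
  · have := h he
    constructor <;> linarith
  all_goals constructor <;> linarith

theorem one_le_next_t (h : s.e = -1 → 1 ≤ s.t) (hT : ¬s.Terminal p) : 1 ≤ (s.next p).t :=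
  (one_le_inv₀ (abs_pos.2 (sub_ne_zero.2 (Ne.symm hT)))).2 (s.abs_sub_digit_le_one p h)

theorem one_le_digit (h : 1 ≤ s.t) : 1 ≤ s.digit p := by
  have hfl : 1 ≤ ⌊s.t⌋ := Int.le_floor.2 (by exact_mod_cast h)
  rcases s.digit_cases p with ⟨-, hd⟩ | ⟨-, -, hd⟩ | ⟨-, -, hd⟩ <;> omega

theorem two_le_digit (h : 1 ≤ s.t) (he : s.e = -1 ∨ (s.next p).e = -1) : 2 ≤ s.digit p := by
  have hfl : 1 ≤ ⌊s.t⌋ := Int.le_floor.2 (by exact_mod_cast h)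
  rcases s.digit_cases p with ⟨-, hd⟩ | ⟨-, -, hd⟩ | ⟨hforced, -, hd⟩
  · omega
  · omega
  · rcases he with he | he
    · have : (2 : ℝ) ≤ s.t := le_of_not_gt fun ht => hforced ⟨he, ht⟩
      have : 2 ≤ ⌊s.t⌋ := Int.le_floor.2 (by exact_mod_cast this)
      omega
    · have := s.next_e_eq_one_of_digit_le p (by rw [hd]; exact Int.floor_le s.t)
      omega

theorem one_le_digit_add_e (h : 1 ≤ s.t) (hs : s.e = 1 ∨ s.e = -1) : 1 ≤ s.digit p + s.e := by
  have := s.one_le_digit p h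
  have := fun he => s.two_le_digit p h (Or.inl he)
  omega

theorem one_le_digit_add_next_e (h : 1 ≤ s.t) : 1 ≤ s.digit p + (s.next p).e := by
  have := s.one_le_digit p h
  have := fun he => s.two_le_digit p h (Or.inr he)
  have := s.next_e_eq_one_or_neg_one p
  omega

theorem qc_le_next_qc (h : s.Admissible) (hs : s.e = 1 ∨ s.e = -1) : s.qc ≤ (s.next p).qc := by
  have ha := s.one_le_digit p h.one_le_t
  have := h.qm_nonneg
  have := h.qc_pos
  rw [next_qc]
  rcases hs with he | he
  · rw [he]; nlinarith
  · have := s.two_le_digit p h.one_le_t (Or.inl he)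
    have := h.qm_lt_qc he
    rw [he]; nlinarith

theorem qc_lt_next_qc (h : s.Admissible) (hs : s.e = 1 ∨ s.e = -1)
    (hgrow : 0 < s.qm ∨ s.e = -1 ∨ (s.next p).e = -1) : s.qc < (s.next p).qc := by
  have ha := s.one_le_digit p h.one_le_t
  have := h.qc_pos
  rw [next_qc]
  rcases hs with he | he
  · rcases hgrow with hqm | he' | he'
    · rw [he]; nlinarith
    · omega
    · have := s.two_le_digit p h.one_le_t (Or.inr he')
      have := h.qm_nonneg
      rw [he]; nlinarith
  · have := s.two_le_digit p h.one_le_t (Or.inl he)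
    have := h.qm_lt_qc he
    rw [he]; nlinarith

theorem Admissible.next (h : s.Admissible) (hs : s.e = 1 ∨ s.e = -1) (hT : ¬s.Terminal p) :
    (s.next p).Admissible where
  one_le_t := s.one_le_next_t p (fun _ => h.one_le_t) hT
  qm_nonneg := h.qc_pos.le
  qm_le_qc := s.qc_le_next_qc p h hs
  qc_pos := h.qc_pos.trans_le (s.qc_le_next_qc p h hs)
  qm_lt_qc he := s.qc_lt_next_qc p h hs (Or.inr (Or.inr he))

theorem Represents.abs_sub_div_le {x : ℝ} {N : ℕ} (hx : s.Represents x) (hP : s.Primitive p N)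
    (hA : s.Admissible) : |x - s.pc / s.qc| ≤ N / s.qc := by
  unfold Represents at hx
  have hqc : (1 : ℝ) ≤ s.qc := by exact_mod_cast hA.qc_pos
  have hqm : (0 : ℝ) ≤ s.qm := by exact_mod_cast hA.qm_nonneg
  have ht := hA.one_le_t
  have hD : 1 ≤ s.t * s.qc + s.e * s.qm := by
    rcases hP.sign with he | he <;> rw [he] <;> push_cast
    · nlinarith
    · have : (s.qm : ℝ) + 1 ≤ s.qc := by exact_mod_cast hA.qm_lt_qc he
      nlinarith
  have habs_e : |(s.e : ℝ)| = 1 := by rcases hP.sign with he | he <;> simp [he]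
  have hdet : |(s.pm : ℝ) * s.qc - s.pc * s.qm| = N := by exact_mod_cast hP.abs_det
  have hkey : (x * s.qc - s.pc) * (s.t * s.qc + s.e * s.qm) =
      s.e * (s.pm * s.qc - s.pc * s.qm) := by
    linear_combination (s.qc : ℝ) * hx
  have habs : |x * s.qc - s.pc| * (s.t * s.qc + s.e * s.qm) = N := by
    rw [← abs_of_pos (one_pos.trans_le hD), ← abs_mul, hkey, abs_mul, habs_e, one_mul, hdet]
  have hnum : |x * s.qc - s.pc| ≤ N := by
    nlinarith [abs_nonneg (x * s.qc - s.pc)]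
  rw [show x - s.pc / s.qc = (x * s.qc - s.pc) / s.qc by field_simp, abs_div,
    abs_of_pos (one_pos.trans_le hqc)]
  gcongr

end State

open State

/-- The fictitious convergent `(p₋₂, q₋₂) = (0, N)` makes `b` the first digit. -/
def init (N : ℕ) (x : ℝ) : State := ⟨0, N, 1, 0, 1, N * x⟩

theorem represents_init (N : ℕ) (x : ℝ) : (init N x).Represents x := by
  simp only [Represents, init]
  push_cast
  ring

theorem primitive_init {p : ℕ} (hp : p ≠ 1) (N : ℕ) (x : ℝ) : (init N x).Primitive p N where
  abs_det := by simp [init]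
  sign := Or.inl rfl
  not_dvd h := hp (Nat.dvd_one.1 (Int.natCast_dvd_natCast.1 (by simpa [init] using h.1)))
  blocked_one h := by simp [init] at h

theorem admissible_next_init (p : ℕ) {N : ℕ} (hN : 0 < N) (x : ℝ)
    (hT : ¬(init N x).Terminal p) : ((init N x).next p).Admissible where
  one_le_t := (init N x).one_le_next_t p (fun h => by simp [init] at h) hT
  qm_nonneg := le_rfl
  qm_le_qc := by simp [init]
  qc_pos := by simpa [init] using hN
  qm_lt_qc _ := by simpa [init] using hN

noncomputable def orbit (p N : ℕ) (x : ℝ) (k : ℕ) : State := (next p)^[k] (init N x)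

section Orbit

variable {p N : ℕ} {x : ℝ}

theorem orbit_succ (k : ℕ) : orbit p N x (k + 1) = (orbit p N x k).next p :=
  Function.iterate_succ_apply' _ _ _

theorem orbit_one_qc : (orbit p N x 1).qc = N := by
  simp [orbit, init]

theorem orbit_pc_succ {i : ℕ} (hi : 1 ≤ i) :
    (orbit p N x (i + 1)).pc = (orbit p N x i).digit p * (orbit p N x i).pc +
      (orbit p N x i).e * (orbit p N x (i - 1)).pc := by
  obtain ⟨j, rfl⟩ : ∃ j, i = j + 1 := ⟨i - 1, by omega⟩
  rw [orbit_succ, next_pc, orbit_succ j, next_pm, Nat.add_sub_cancel]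

theorem orbit_qc_succ {i : ℕ} (hi : 1 ≤ i) :
    (orbit p N x (i + 1)).qc = (orbit p N x i).digit p * (orbit p N x i).qc +
      (orbit p N x i).e * (orbit p N x (i - 1)).qc := by
  obtain ⟨j, rfl⟩ : ∃ j, i = j + 1 := ⟨i - 1, by omega⟩
  rw [orbit_succ, next_qc, orbit_succ j, next_qm, Nat.add_sub_cancel]

theorem one_le_digit_add_orbit_succ_e {i : ℕ} (hA : (orbit p N x i).Admissible) :
    1 ≤ (orbit p N x i).digit p + (orbit p N x (i + 1)).e := by
  rw [orbit_succ]
  exact (orbit p N x i).one_le_digit_add_next_e p hA.one_le_t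

theorem primitive_orbit (hp : p ≠ 1) (k : ℕ) : (orbit p N x k).Primitive p N := by
  induction k with
  | zero => exact primitive_init hp N x
  | succ k ih => rw [orbit_succ]; exact ih.next

theorem represents_orbit {k : ℕ} (h : ∀ j < k, ¬(orbit p N x j).Terminal p) :
    (orbit p N x k).Represents x := by
  induction k with
  | zero => exact represents_init N x
  | succ k ih =>
    rw [orbit_succ]
    exact (ih fun j hj => h j (by omega)).next _ _ (h k (by omega))

theorem admissible_orbit (hp : p ≠ 1) (hN : 0 < N) {k : ℕ} (hk : 1 ≤ k)
    (h : ∀ j < k, ¬(orbit p N x j).Terminal p) : (orbit p N x k).Admissible := by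
  induction k, hk using Nat.le_induction with
  | base => exact admissible_next_init p hN x (h 0 one_pos)
  | succ k hk ih =>
    rw [orbit_succ]
    exact (ih fun j hj => h j (by omega)).next _ _ (primitive_orbit hp k).sign (h k (by omega))

theorem isCoprime_orbit {l : ℕ} (hp : p.Prime) (k : ℕ) :
    IsCoprime (orbit p (p ^ l) x k).pc (orbit p (p ^ l) x k).qc :=
  isCoprime_of_abs_sub_eq_prime_pow hp (primitive_orbit hp.ne_one k).abs_det
    (primitive_orbit hp.ne_one k).not_dvd

theorem tendsto_orbit (hp : p ≠ 1) (hN : 0 < N) (h : ∀ k, ¬(orbit p N x k).Terminal p) :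
    Tendsto (fun k => ((orbit p N x k).pc : ℝ) / (orbit p N x k).qc) atTop (𝓝 x) := by
  have hA : ∀ k, 1 ≤ k → (orbit p N x k).Admissible :=
    fun k hk => admissible_orbit hp hN hk fun j _ => h j
  have hq : ∀ k : ℕ, (k : ℤ) ≤ (orbit p N x (k + 2)).qc := by
    intro k
    induction k with
    | zero => exact (hA 2 (by norm_num)).qc_pos.le
    | succ k ih =>
      have hqm : 0 < (orbit p N x (k + 2)).qm := by
        rw [orbit_succ, next_qm]; exact (hA (k + 1) (by omega)).qc_pos
      have := (orbit p N x (k + 2)).qc_lt_next_qc p (hA _ (by omega))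
        (primitive_orbit hp _).sign (Or.inl hqm)
      rw [← orbit_succ] at this
      rw [show k + 1 + 2 = k + 2 + 1 by ring]
      push_cast
      omega
  have hq_top : Tendsto (fun k => ((orbit p N x (k + 2)).qc : ℝ)) atTop atTop :=
    tendsto_atTop_mono (fun k => by exact_mod_cast hq k) tendsto_natCast_atTop_atTop
  rw [← tendsto_add_atTop_iff_nat 2, tendsto_iff_norm_sub_tendsto_zero]
  refine squeeze_zero (fun _ => norm_nonneg _) (fun k => ?_)
    ((tendsto_const_nhds (x := (N : ℝ))).div_atTop hq_top)
  rw [Real.norm_eq_abs, abs_sub_comm]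
  exact (represents_orbit fun j _ => h j).abs_sub_div_le p _ (primitive_orbit hp _)
    (hA _ (by omega))

end Orbit

theorem exists_fcf_of_exists_terminal {p : ℕ} (hp : p.Prime) (l : ℕ) (x : ℝ)
    (h : ∃ k, (orbit p (p ^ l) x k).Terminal p) :
    ∃ (n : ℕ) (F : FCF (p ^ l) n), (F.p (n + 1) : ℝ) / (F.q (n + 1) : ℝ) = x := by
  classical
  set s := orbit p (p ^ l) x
  have hpre : ∀ i ≤ Nat.find h, ∀ j < i, ¬(s j).Terminal p :=
    fun _ hi _ hj => Nat.find_min h (by omega)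
  have hA : ∀ i, 1 ≤ i → i ≤ Nat.find h → (s i).Admissible :=
    fun i h1 h2 => admissible_orbit hp.ne_one (pow_pos hp.pos l) h1 (hpre i h2)
  refine ⟨Nat.find h, ⟨(s 1).pc, fun i => (s i).digit p, fun i => (s i).e, fun i => (s i).pc,
    fun i => (s i).qc, orbit_one_qc (x := x) ▸ isCoprime_orbit hp 1, rfl, rfl, rfl, orbit_one_qc,
    fun i h1 h2 => (s i).one_le_digit p (hA i h1 h2).one_le_t,
    fun i _ _ => (primitive_orbit hp.ne_one i).sign,
    fun i h1 _ => orbit_pc_succ h1, fun i h1 _ => orbit_qc_succ h1,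
    fun i h1 h2 => one_le_digit_add_orbit_succ_e (hA i h1 h2.le),
    fun i h1 h2 => (s i).one_le_digit_add_e p (hA i h1 h2).one_le_t
      (primitive_orbit hp.ne_one i).sign,
    fun i _ _ => isCoprime_orbit hp (i + 1)⟩, ?_⟩
  have hred := (primitive_orbit hp.ne_one (Nat.find h + 1) (N := p ^ l) (x := x)).not_dvd
  rw [orbit_succ] at hred
  show ((s (Nat.find h + 1)).pc : ℝ) / (s (Nat.find h + 1)).qc = x
  rw [show s (Nat.find h + 1) = (s (Nat.find h)).next p from orbit_succ _]
  exact (represents_orbit (hpre _ le_rfl)).div_next_eq p _ (Nat.find_spec h) hred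

theorem exists_fcfInf_of_forall_not_terminal {p : ℕ} (hp : p.Prime) (l : ℕ) (x : ℝ)
    (h : ∀ k, ¬(orbit p (p ^ l) x k).Terminal p) :
    ∃ F : FCFInf (p ^ l),
      Tendsto (fun n => (F.p (n + 1) : ℝ) / (F.q (n + 1) : ℝ)) atTop (𝓝 x) := by
  set s := orbit p (p ^ l) x
  have hA : ∀ i, 1 ≤ i → (s i).Admissible :=
    fun i hi => admissible_orbit hp.ne_one (pow_pos hp.pos l) hi fun j _ => h j
  refine ⟨⟨(s 1).pc, fun i => (s i).digit p, fun i => (s i).e, fun i => (s i).pc,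
    fun i => (s i).qc, orbit_one_qc (x := x) ▸ isCoprime_orbit hp 1, rfl, rfl, rfl, orbit_one_qc,
    fun i hi => (s i).one_le_digit p (hA i hi).one_le_t,
    fun i _ => (primitive_orbit hp.ne_one i).sign,
    fun i hi => orbit_pc_succ hi, fun i hi => orbit_qc_succ hi,
    fun i hi => one_le_digit_add_orbit_succ_e (hA i hi),
    fun i hi => (s i).one_le_digit_add_e p (hA i hi).one_le_t (primitive_orbit hp.ne_one i).sign,
    fun i _ => isCoprime_orbit hp (i + 1)⟩, ?_⟩
  exact (tendsto_add_atTop_iff_nat 1).2 (tendsto_orbit hp.ne_one (pow_pos hp.pos l) h)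

end FCFExpansion

theorem stmt18_general (p l : ℕ) (hp : p.Prime) (x : ℝ) :
    (∃ (n : ℕ) (F : FCF (p ^ l) n),
      (F.p (n + 1) : ℝ) / (F.q (n + 1) : ℝ) = x) ∨
    (∃ F : FCFInf (p ^ l),
      Filter.Tendsto (fun n => (F.p (n + 1) : ℝ) / (F.q (n + 1) : ℝ))
        Filter.atTop (nhds x)) := by
  by_cases h : ∃ k, (FCFExpansion.orbit p (p ^ l) x k).Terminal p
  · exact Or.inl (FCFExpansion.exists_fcf_of_exists_terminal hp l x h)
  · exact Or.inr (FCFExpansion.exists_fcfInf_of_forall_not_terminal hp l x (not_exists.1 h))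

/-- Every real number `x` has an `F_{p^l}`-continued fraction
expansion: either a finite one whose value (last convergent) equals `x`, or an
infinite one whose sequence of convergents converges to `x`. -/
theorem stmt18 (p l : ℕ) (hp : p.Prime) (hl : 1 ≤ l) (x : ℝ) :
    (∃ (n : ℕ) (F : FCF (p ^ l) n),
      (F.p (n + 1) : ℝ) / (F.q (n + 1) : ℝ) = x) ∨
    (∃ F : FCFInf (p ^ l),
      Filter.Tendsto (fun n => (F.p (n + 1) : ℝ) / (F.q (n + 1) : ℝ))
        Filter.atTop (nhds x)) :=
  stmt18_general p l hp x
end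

section
/- Let a, b, c, d ∈ ℤ with 0 < d < b, gcd(a,b) = 1, gcd(c,d) = 1, and ad − bc = ±1. If x, y ∈ ℤ satisfy 0 < y < b, gcd(x,y) = 1, and ay − bx = ±1, then either (x, y) = (c, d) or (x, y) = (a − c, b − d). -/
/-!
Solutions `(x, y)` of `a y - b x = ε` with `a, b` coprime differ by integer multiples of `(a, b)`,
so two of them whose second coordinates are less than `b` apart coincide. Both `(c, d)` and
`(a - c, b - d)` have second coordinate in `(0, b)`, and they solve the equation for the two
opposite values of `ε = ±1`.
-/

lemma Int.eq_of_mul_sub_mul_eq_of_abs_sub_lt {a b x y u v : ℤ} (hab : IsCoprime a b)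
    (heq : a * y - b * x = a * v - b * u) (hlt : |y - v| < b) : x = u ∧ y = v := by
  have hdvd : b ∣ y - v := hab.symm.dvd_of_dvd_mul_left ⟨x - u, by linear_combination heq⟩
  have hyv : y = v := sub_eq_zero.mp (Int.eq_zero_of_abs_lt_dvd hdvd hlt)
  have hb : b ≠ 0 := (lt_of_le_of_lt (abs_nonneg _) hlt).ne'
  have hxu : b * (x - u) = 0 := by linear_combination hyv * a - heq
  exact ⟨sub_eq_zero.mp ((mul_eq_zero.mp hxu).resolve_left hb), hyv⟩

theorem stmt19_general (a b c d x y : ℤ) (hd : 0 < d) (hdb : d < b)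
    (hab : IsCoprime a b)
    (h1 : a * d - b * c = 1 ∨ a * d - b * c = -1)
    (hy : 0 < y) (hyb : y < b)
    (h2 : a * y - b * x = 1 ∨ a * y - b * x = -1) :
    (x = c ∧ y = d) ∨ (x = a - c ∧ y = b - d) := by
  have hsolves : a * y - b * x = a * d - b * c ∨ a * y - b * x = a * (b - d) - b * (a - c) := by
    rcases h1 with h1 | h1 <;> rcases h2 with h2 | h2 <;>
      first
      | exact Or.inl (by linear_combination h2 - h1)
      | exact Or.inr (by linear_combination h2 + h1)
  rcases hsolves with h | h
  · exact Or.inl (Int.eq_of_mul_sub_mul_eq_of_abs_sub_lt hab h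
      (abs_sub_lt_iff.mpr ⟨by linarith, by linarith⟩))
  · exact Or.inr (Int.eq_of_mul_sub_mul_eq_of_abs_sub_lt hab h
      (abs_sub_lt_iff.mpr ⟨by linarith, by linarith⟩))

/-- Let `a, b, c, d ∈ ℤ` with `0 < d < b`, `gcd(a,b) = 1`,
`gcd(c,d) = 1` and `a·d − b·c = ±1`.  If `x, y ∈ ℤ` satisfy `0 < y < b`,
`gcd(x,y) = 1` and `a·y − b·x = ±1`, then `(x, y) = (c, d)` or
`(x, y) = (a − c, b − d)`. -/
theorem stmt19 (a b c d x y : ℤ) (hd : 0 < d) (hdb : d < b)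
    (hab : IsCoprime a b) (hcd : IsCoprime c d)
    (h1 : a * d - b * c = 1 ∨ a * d - b * c = -1)
    (hy : 0 < y) (hyb : y < b) (hxy : IsCoprime x y)
    (h2 : a * y - b * x = 1 ∨ a * y - b * x = -1) :
    (x = c ∧ y = d) ∨ (x = a - c ∧ y = b - d) :=
  stmt19_general a b c d x y hd hdb hab h1 hy hyb h2
end
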